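/- arXiv:2505.12035 — 7 statements merged into one kernel-verified Lean document; each statement's English description precedes it below -/
import Mathlib

section
/- Let r ≥ 3 and n ≥ r + 2. Let H'_r be the r-uniform hypergraph on vertex set {1,...,n} whose edges are all r-element subsets of {1,...,n−1} together with the single additional edge {1,...,r−1, n}. Then H'_r contains no Hamiltonian Berge cycle, and every pair of non-adjacent vertices u, v of H'_r satisfies d_{∂H'_r}(u) + d_{∂H'_r}(v) = n + r − 3. -/
/-- Two vertices are adjacent in the hypergraph with edge set `H`
if some edge contains both of them. -/
def HAdj {V : Type*} (H : Finset (Finset V)) (u v : V) : Prop :=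
  u ≠ v ∧ ∃ e ∈ H, u ∈ e ∧ v ∈ e

/-- The degree of `u` in the 2-shadow `∂H`: the number of vertices adjacent to `u`. -/
noncomputable def shadowDeg {V : Type*} (H : Finset (Finset V)) (u : V) : ℕ :=
  {v | HAdj H u v}.ncard

/-- A `[3]`-graph: every edge has exactly 2 or 3 vertices. -/
def IsThreeGraph {V : Type*} (H : Finset (Finset V)) : Prop :=
  ∀ e ∈ H, e.card = 2 ∨ e.card = 3

/-- A Berge cycle of length `t` in the hypergraph with edge set `H`:
`t` distinct vertices `vtx i` and `t` distinct edges `edge i` (indices mod `t`)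
with `{vtx i, vtx (i+1)} ⊆ edge i` for every `i`. -/
structure BergeCycle {V : Type*} (H : Finset (Finset V)) (t : ℕ) where
  vtx : ZMod t → V
  edge : ZMod t → Finset V
  vtx_inj : Function.Injective vtx
  edge_inj : Function.Injective edge
  edge_mem : ∀ i, edge i ∈ H
  mem_fst : ∀ i, vtx i ∈ edge i
  mem_snd : ∀ i, vtx (i + 1) ∈ edge i

/-- `d_C(u)`: the number of vertices of the Berge cycle `C` adjacent to `u`. -/
noncomputable def BergeCycle.dC {V : Type*} {H : Finset (Finset V)} {t : ℕ}
    (C : BergeCycle H t) (u : V) : ℕ :=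
  {v | v ∈ Set.range C.vtx ∧ HAdj H u v}.ncard

/-- `H` contains a Hamiltonian Berge cycle, i.e. a Berge cycle whose
vertex set is all of `V`. -/
def HamiltonianBergeCycle {V : Type*} (H : Finset (Finset V)) : Prop :=
  ∃ (t : ℕ) (C : BergeCycle H t), Set.range C.vtx = Set.univ

/-- A set `U` of indices of vertices of the Berge cycle `C` is usable for `u`:
(1) for every `i ∈ U` there is an edge in `E(u, v_{i-1}) - {e_{i-2}}`;
(2) any two distinct `i, j ∈ U` are non-consecutive on `C`;
(3) for every pair of distinct `i, j ∈ U` there are distinct edges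
`e ∈ E(u, v_{i-1}) - {e_{i-2}}` and `e' ∈ E(u, v_{j-1}) - {e_{j-2}}`. -/
def Usable {V : Type*} {H : Finset (Finset V)} {t : ℕ} (C : BergeCycle H t) (u : V)
    (U : Set (ZMod t)) : Prop :=
  (∀ i ∈ U, ∃ e ∈ H, e ≠ C.edge (i - 2) ∧ u ∈ e ∧ C.vtx (i - 1) ∈ e) ∧
  (∀ i ∈ U, ∀ j ∈ U, i ≠ j → j ≠ i + 1 ∧ j ≠ i - 1) ∧
  (∀ i ∈ U, ∀ j ∈ U, i ≠ j → ∃ e ∈ H, ∃ e' ∈ H, e ≠ e' ∧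
    e ≠ C.edge (i - 2) ∧ u ∈ e ∧ C.vtx (i - 1) ∈ e ∧
    e' ≠ C.edge (j - 2) ∧ u ∈ e' ∧ C.vtx (j - 1) ∈ e')

/-- `CwBtw a b c` : on the cycle oriented clockwise, `b` lies strictly between
`a` and `c` on the clockwise arc from `a` to `c`. -/
def CwBtw {t : ℕ} (a b c : ZMod t) : Prop :=
  0 < (b - a).val ∧ (b - a).val < (c - a).val

/-- `e` is an `(i,j;k)`-bridge of the Berge cycle `C`. -/
def IsBridge {V : Type*} [DecidableEq V] {H : Finset (Finset V)} {t : ℕ}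
    (C : BergeCycle H t) (i j k : ZMod t) (e : Finset V) : Prop :=
  (CwBtw i k j ∧ ((e = C.edge (k + 1) ∧ e = {C.vtx i, C.vtx (k + 1), C.vtx (k + 2)}) ∨
                (e = C.edge (k - 1) ∧ e = {C.vtx j, C.vtx k, C.vtx (k - 1)}))) ∨
  (CwBtw j k i ∧ ((e = C.edge (k - 1) ∧ e = {C.vtx i, C.vtx k, C.vtx (k - 1)}) ∨
                (e = C.edge (k + 1) ∧ e = {C.vtx j, C.vtx (k + 1), C.vtx (k + 2)})))

/-- `R(v_i, v_j)`: the set of bridges produced by the pair `{v_i, v_j}`,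
i.e. all `(i,j;k)`-bridges over `k ∉ {i, j}`. -/
def RBridges {V : Type*} [DecidableEq V] {H : Finset (Finset V)} {t : ℕ}
    (C : BergeCycle H t) (i j : ZMod t) : Set (Finset V) :=
  {e | ∃ k : ZMod t, k ≠ i ∧ k ≠ j ∧ IsBridge C i j k e}

/-!
The extra vertex `w` lies in a single edge, while a Berge cycle on at least two vertices
enters and leaves each of its vertices through two distinct edges; so no Hamiltonian Berge
cycle exists. The shadow is the clique on all vertices but `w`, with `w` joined to the
`r - 1` other vertices of its edge; hence the non-adjacent pairs are `w` and a vertex `x`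
outside that edge, of shadow degrees `r - 1` and `n - 2`.
-/

lemma HAdj.symm {V : Type*} {H : Finset (Finset V)} {u v : V} (h : HAdj H u v) : HAdj H v u :=
  ⟨h.1.symm, h.2.imp fun _ ⟨he, hu, hv⟩ => ⟨he, hv, hu⟩⟩

lemma shadowDeg_eq_card {V : Type*} {H : Finset (Finset V)} {u : V} {N : Finset V}
    (h : ∀ v, HAdj H u v ↔ v ∈ N) : shadowDeg H u = N.card := by
  rw [shadowDeg, ← Set.ncard_coe_finset]
  exact congrArg Set.ncard (Set.ext h)

lemma BergeCycle.edge_sub_one_ne {V : Type*} {H : Finset (Finset V)} {t : ℕ} (ht : t ≠ 1)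
    (C : BergeCycle H t) (i : ZMod t) : C.edge (i - 1) ≠ C.edge i := by
  have : Nontrivial (ZMod t) := ZMod.nontrivial_iff.2 ht
  exact C.edge_inj.ne (sub_eq_self.not.2 one_ne_zero)

lemma not_hamiltonianBergeCycle_of_unique_edge {V : Type*} [Nontrivial V]
    {H : Finset (Finset V)} (w : V) (f : Finset V) (hw : ∀ e ∈ H, w ∈ e → e = f) :
    ¬ HamiltonianBergeCycle H := by
  rintro ⟨t, C, hC⟩
  have ht : t ≠ 1 := by
    rintro rfl
    obtain ⟨x, y, hxy⟩ := exists_pair_ne V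
    obtain ⟨i, rfl⟩ : x ∈ Set.range C.vtx := hC ▸ Set.mem_univ x
    obtain ⟨j, rfl⟩ : y ∈ Set.range C.vtx := hC ▸ Set.mem_univ y
    exact hxy (congrArg C.vtx (Subsingleton.elim i j))
  obtain ⟨i, rfl⟩ : w ∈ Set.range C.vtx := hC ▸ Set.mem_univ w
  have hprev : C.vtx i ∈ C.edge (i - 1) := by simpa using C.mem_snd (i - 1)
  exact C.edge_sub_one_ne ht i <|
    (hw _ (C.edge_mem _) hprev).trans (hw _ (C.edge_mem i) (C.mem_fst i)).symm

section CliqueWithPendantEdge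

variable {V : Type*} [DecidableEq V] {S f : Finset V} {r : ℕ}

lemma eq_of_mem_powersetCard_union_singleton {w : V} (hw : w ∉ S) {e : Finset V}
    (he : e ∈ S.powersetCard r ∪ {f}) (hwe : w ∈ e) : e = f := by
  rcases Finset.mem_union.1 he with he | he
  · exact absurd ((Finset.mem_powersetCard.1 he).1 hwe) hw
  · exact Finset.mem_singleton.1 he

lemma hAdj_powersetCard_union_singleton_iff_of_notMem {w : V} (hw : w ∉ S) (hwf : w ∈ f)
    (v : V) : HAdj (S.powersetCard r ∪ {f}) w v ↔ v ∈ f.erase w := by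
  constructor
  · rintro ⟨hne, e, he, hwe, hve⟩
    rw [eq_of_mem_powersetCard_union_singleton hw he hwe] at hve
    exact Finset.mem_erase.2 ⟨hne.symm, hve⟩
  · intro hv
    obtain ⟨hne, hvf⟩ := Finset.mem_erase.1 hv
    exact ⟨hne.symm, f, Finset.mem_union_right _ (Finset.mem_singleton_self f), hwf, hvf⟩

lemma hAdj_powersetCard_union_singleton_of_mem (hr : 2 ≤ r) (hrS : r ≤ S.card)
    {u v : V} (hu : u ∈ S) (hv : v ∈ S) (huv : u ≠ v) :
    HAdj (S.powersetCard r ∪ {f}) u v := by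
  have huvS : {u, v} ⊆ S := Finset.insert_subset hu (Finset.singleton_subset_iff.2 hv)
  have huvr : ({u, v} : Finset V).card ≤ r := (Finset.card_pair huv).trans_le hr
  obtain ⟨e, huve, heS, her⟩ := Finset.exists_subsuperset_card_eq huvS huvr hrS
  refine ⟨huv, e, Finset.mem_union_left _ (Finset.mem_powersetCard.2 ⟨heS, her⟩), ?_, ?_⟩
  · exact huve (Finset.mem_insert_self u {v})
  · exact huve (Finset.mem_insert_of_mem (Finset.mem_singleton_self v))

lemma hAdj_powersetCard_union_singleton_iff_of_mem_of_notMem (hr : 2 ≤ r) (hrS : r ≤ S.card)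
    {x : V} (hx : x ∈ S) (hxf : x ∉ f) (v : V) :
    HAdj (S.powersetCard r ∪ {f}) x v ↔ v ∈ S.erase x := by
  constructor
  · rintro ⟨hne, e, he, hxe, hve⟩
    rcases Finset.mem_union.1 he with he | he
    · exact Finset.mem_erase.2 ⟨hne.symm, (Finset.mem_powersetCard.1 he).1 hve⟩
    · exact absurd (Finset.mem_singleton.1 he ▸ hxe) hxf
  · intro hv
    obtain ⟨hne, hvS⟩ := Finset.mem_erase.1 hv
    exact hAdj_powersetCard_union_singleton_of_mem hr hrS hx hvS hne.symm

lemma shadowDeg_add_shadowDeg_of_not_hAdj (hr : 2 ≤ r) (hrS : r ≤ S.card) {w : V}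
    (hS : ∀ x, x ∈ S ↔ x ≠ w) (hwf : w ∈ f) {u v : V} (huv : u ≠ v)
    (hnadj : ¬ HAdj (S.powersetCard r ∪ {f}) u v) :
    shadowDeg (S.powersetCard r ∪ {f}) u + shadowDeg (S.powersetCard r ∪ {f}) v =
      S.card + f.card - 2 := by
  wlog hu : u = w generalizing u v
  · have hv : v = w := by
      by_contra hv
      exact hnadj (hAdj_powersetCard_union_singleton_of_mem hr hrS ((hS u).2 hu) ((hS v).2 hv) huv)
    rw [add_comm]
    exact this huv.symm (fun h => hnadj h.symm) hv
  subst hu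
  have huS : u ∉ S := fun h => (hS u).1 h rfl
  have hvS : v ∈ S := (hS v).2 huv.symm
  have hvf : v ∉ f := fun hvf =>
    hnadj ((hAdj_powersetCard_union_singleton_iff_of_notMem huS hwf v).2
      (Finset.mem_erase.2 ⟨huv.symm, hvf⟩))
  rw [shadowDeg_eq_card (hAdj_powersetCard_union_singleton_iff_of_notMem huS hwf),
    shadowDeg_eq_card (hAdj_powersetCard_union_singleton_iff_of_mem_of_notMem hr hrS hvS hvf),
    Finset.card_erase_of_mem hwf, Finset.card_erase_of_mem hvS]
  have := Finset.card_pos.2 ⟨v, hvS⟩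
  have := Finset.card_pos.2 ⟨u, hwf⟩
  omega

end CliqueWithPendantEdge

/-- The construction `H'_r`: an `(n-1)`-clique `K_{n-1}^{(r)}`
together with one extra vertex `w` in exactly one edge `{1, …, r-1, n}`.
It is not Berge-Hamiltonian, and every non-adjacent pair has shadow degree
sum exactly `n + r - 3`. -/
theorem stmt1 (n r : ℕ) (hr : 3 ≤ r) (hn : r + 2 ≤ n)
    (w : Fin n) (hw : (w : ℕ) = n - 1)
    (H : Finset (Finset (Fin n)))
    (hH : H = ((Finset.univ.filter fun x : Fin n => (x : ℕ) < n - 1).powersetCard r) ∪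
      {(Finset.univ.filter fun x : Fin n => (x : ℕ) < r - 1) ∪ {w}}) :
    ¬ HamiltonianBergeCycle H ∧
      ∀ u v : Fin n, u ≠ v → ¬ HAdj H u v →
        shadowDeg H u + shadowDeg H v = n + r - 3 := by
  set S : Finset (Fin n) := Finset.univ.filter fun x : Fin n => (x : ℕ) < n - 1
  set A : Finset (Fin n) := Finset.univ.filter fun x : Fin n => (x : ℕ) < r - 1
  have hS : ∀ x, x ∈ S ↔ x ≠ w := fun x => by
    simp only [S, Finset.mem_filter, Finset.mem_univ, true_and, ne_eq, Fin.ext_iff, hw]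
    omega
  have hScard : S.card = n - 1 := by
    rw [show S = Finset.univ.erase w by ext x; simp [hS x], Finset.card_erase_of_mem
      (Finset.mem_univ w), Finset.card_univ, Fintype.card_fin]
  have hAcard : A.card = r - 1 := by
    rw [Fin.card_filter_val_lt]
    omega
  have hwA : w ∉ A := by
    simp only [A, Finset.mem_filter, Finset.mem_univ, true_and, hw]
    omega
  have hfcard : (A ∪ {w}).card = r := by
    rw [Finset.card_union_of_disjoint (Finset.disjoint_singleton_right.2 hwA)]
    simp only [hAcard, Finset.card_singleton]
    omega
  have hwS : w ∉ S := fun h => (hS w).1 h rfl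
  have : Nontrivial (Fin n) := Fin.nontrivial_iff_two_le.2 (by omega)
  subst hH
  refine ⟨not_hamiltonianBergeCycle_of_unique_edge w _
    fun e he hwe => eq_of_mem_powersetCard_union_singleton hwS he hwe, ?_⟩
  intro u v huv hnadj
  rw [shadowDeg_add_shadowDeg_of_not_hAdj (by omega) (by omega) hS
    (Finset.mem_union_right _ (Finset.mem_singleton_self w)) huv hnadj, hScard, hfcard]
  omega
end

section
/- Let n, k be positive integers with k ≥ 2, binomial(k,2) < n, and k dividing n, and set r = 2n/k. Let G_k be the r-uniform hypergraph whose vertex set is partitioned into parts V_1,...,V_k each of size n/k, with edge set {V_i ∪ V_j : 1 ≤ i < j ≤ k}. Then every pair of distinct vertices of G_k is adjacent, but G_k contains no Hamiltonian Berge cycle. -/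
open Finset

lemma mem_union_parts {ι β : Type*} [DecidableEq ι] [Fintype β] [DecidableEq β] {i j : ι}
    {w : ι × β} (hw : w.1 = i ∨ w.1 = j) : w ∈ ({i} ×ˢ (univ : Finset β)) ∪ ({j} ×ˢ univ) := by
  simpa [Prod.ext_iff, eq_comm] using hw

/-- The hypergraph `G_k` with parts `{i} × β` indexed by `ι`. -/
def cliqueBlowup (ι β : Type*) [LinearOrder ι] [Fintype ι] [Fintype β] [DecidableEq β] :
    Finset (Finset (ι × β)) :=
  image (fun p : ι × ι => ({p.1} ×ˢ univ) ∪ ({p.2} ×ˢ univ)) {p : ι × ι | p.1 < p.2}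

section CliqueBlowup

variable {ι β : Type*} [LinearOrder ι] [Fintype ι] [Fintype β] [DecidableEq β]

lemma union_parts_mem_cliqueBlowup {i j : ι} (hij : i ≠ j) :
    ({i} ×ˢ univ) ∪ ({j} ×ˢ univ) ∈ cliqueBlowup ι β := by
  rcases hij.lt_or_gt with h | h
  · exact mem_image.2 ⟨(i, j), by simpa using h, rfl⟩
  · exact mem_image.2 ⟨(j, i), by simpa using h, union_comm _ _⟩

lemma hAdj_cliqueBlowup [Nontrivial ι] {u v : ι × β} (huv : u ≠ v) :
    HAdj (cliqueBlowup ι β) u v := by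
  refine ⟨huv, ?_⟩
  -- Two vertices in the same part share the edge through any other part.
  obtain ⟨j, hj⟩ : ∃ j, u.1 ≠ j ∧ (v.1 = u.1 ∨ v.1 = j) := by
    by_cases h : v.1 = u.1
    · obtain ⟨j, hj⟩ := exists_ne u.1
      exact ⟨j, hj.symm, .inl h⟩
    · exact ⟨v.1, Ne.symm h, .inr rfl⟩
  exact ⟨_, union_parts_mem_cliqueBlowup hj.1, mem_union_parts (.inl rfl), mem_union_parts hj.2⟩

lemma card_cliqueBlowup_le : #(cliqueBlowup ι β) ≤ (Fintype.card ι).choose 2 :=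
  Fintype.card_product_filter_lt (α := ι) ▸ card_image_le

end CliqueBlowup

section BergeCycle

variable {V : Type*} {H : Finset (Finset V)} {t : ℕ}

lemma BergeCycle.length_ne_zero [Finite V] (C : BergeCycle H t) : t ≠ 0 := by
  rintro rfl
  obtain ⟨a, b, hab, h⟩ := Finite.exists_ne_map_eq_of_infinite C.vtx
  exact hab (C.vtx_inj h)

lemma BergeCycle.length_le_card [Finite V] (C : BergeCycle H t) : t ≤ #H := by
  have : NeZero t := ⟨C.length_ne_zero⟩
  simpa [ZMod.card] using card_le_card_of_injOn (s := univ) C.edge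
    (fun i _ ↦ C.edge_mem i) (fun i _ j _ h ↦ C.edge_inj h)

lemma HamiltonianBergeCycle.card_le [Fintype V] (h : HamiltonianBergeCycle H) :
    Fintype.card V ≤ #H := by
  obtain ⟨t, C, hC⟩ := h
  have : NeZero t := ⟨C.length_ne_zero⟩
  have hbij : Function.Bijective C.vtx := ⟨C.vtx_inj, Set.range_eq_univ.1 hC⟩
  simpa [← Fintype.card_of_bijective hbij, ZMod.card] using C.length_le_card

end BergeCycle

theorem stmt3_general (n k : ℕ) (hk : 2 ≤ k) (hbin : k.choose 2 < n)
    (hdvd : k ∣ n)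
    (H : Finset (Finset (Fin k × Fin (n / k))))
    (hH : H = Finset.image
      (fun p : Fin k × Fin k =>
        (({p.1} : Finset (Fin k)) ×ˢ (Finset.univ : Finset (Fin (n / k)))) ∪
        (({p.2} : Finset (Fin k)) ×ˢ (Finset.univ : Finset (Fin (n / k)))))
      (Finset.univ.filter fun p : Fin k × Fin k => p.1 < p.2)) :
    (∀ u v : Fin k × Fin (n / k), u ≠ v → HAdj H u v) ∧
      ¬ HamiltonianBergeCycle H := by
  change H = cliqueBlowup (Fin k) (Fin (n / k)) at hH
  subst hH
  have : Nontrivial (Fin k) := Fin.nontrivial_iff_two_le.2 hk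
  refine ⟨fun u v ↦ hAdj_cliqueBlowup, fun hC ↦ ?_⟩
  have hcard := hC.card_le.trans card_cliqueBlowup_le
  simp only [Fintype.card_prod, Fintype.card_fin, Nat.mul_div_cancel' hdvd] at hcard
  omega

/-- The hypergraph blow-up `G_k` of the clique `K_k` with parts
of size `n/k` and edges `V_i ∪ V_j`: all pairs of distinct vertices are
adjacent but there is no Hamiltonian Berge cycle. -/
theorem stmt3 (n k : ℕ) (hn : 0 < n) (hk : 2 ≤ k) (hbin : k.choose 2 < n)
    (hdvd : k ∣ n)
    (H : Finset (Finset (Fin k × Fin (n / k))))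
    (hH : H = Finset.image
      (fun p : Fin k × Fin k =>
        (({p.1} : Finset (Fin k)) ×ˢ (Finset.univ : Finset (Fin (n / k)))) ∪
        (({p.2} : Finset (Fin k)) ×ˢ (Finset.univ : Finset (Fin (n / k)))))
      (Finset.univ.filter fun p : Fin k × Fin k => p.1 < p.2)) :
    (∀ u v : Fin k × Fin (n / k), u ≠ v → HAdj H u v) ∧
      ¬ HamiltonianBergeCycle H :=
  stmt3_general n k hk hbin hdvd H hH
end

section
/- Let n ≥ 6 and let H be a [3]-graph on n vertices such that every pair of non-adjacent vertices u, v satisfies d_{∂H}(u) + d_{∂H}(v) ≥ n + 2. Suppose H contains a Hamiltonian Berge path but contains no Hamiltonian Berge cycle. Then H contains a Berge cycle of length n−1 or of length n−2. -/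
/-- A Berge path of length `t`: `t+1` distinct vertices and `t` distinct edges
with `{vtx i, vtx (i+1)} ⊆ edge i` for every `i ∈ [t]`. -/
structure BergePath {V : Type*} (H : Finset (Finset V)) (t : ℕ) where
  vtx : Fin (t + 1) → V
  edge : Fin t → Finset V
  vtx_inj : Function.Injective vtx
  edge_inj : Function.Injective edge
  edge_mem : ∀ i, edge i ∈ H
  mem_fst : ∀ i : Fin t, vtx i.castSucc ∈ edge i
  mem_snd : ∀ i : Fin t, vtx i.succ ∈ edge i

section MyAux
variable {V : Type*}

lemma my_hadj_comm {H : Finset (Finset V)} {u w : V} (h : HAdj H u w) : HAdj H w u := by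
  obtain ⟨hne, e, he, h1, h2⟩ := h
  exact ⟨hne.symm, e, he, h2, h1⟩

lemma my_card_four [DecidableEq V] {w x y z : V}
    (h1 : w ≠ x) (h2 : w ≠ y) (h3 : w ≠ z) (h4 : x ≠ y) (h5 : x ≠ z) (h6 : y ≠ z) :
    ({w, x, y, z} : Finset V).card = 4 := by
  rw [Finset.card_insert_of_notMem (by simp [h1, h2, h3]),
    Finset.card_insert_of_notMem (by simp [h4, h5]),
    Finset.card_insert_of_notMem (by simp [h6]), Finset.card_singleton]

noncomputable def myBuildCycle (H : Finset (Finset V)) (m : ℕ) (hm : 0 < m)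
    (c : Fin m → V) (E : Fin m → Finset V)
    (hc : Function.Injective c) (hE : Function.Injective E)
    (hmem : ∀ k, E k ∈ H) (hfst : ∀ k, c k ∈ E k)
    (hsnd : ∀ k : Fin m, c ⟨(k.val + 1) % m, Nat.mod_lt _ hm⟩ ∈ E k) :
    BergeCycle H m :=
  haveI : NeZero m := ⟨hm.ne'⟩
  { vtx := fun i => c ⟨i.val, ZMod.val_lt i⟩
    edge := fun i => E ⟨i.val, ZMod.val_lt i⟩
    vtx_inj := by
      intro x y h
      have h2 := congrArg Fin.val (hc h)
      exact ZMod.val_injective m h2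
    edge_inj := by
      intro x y h
      have h2 := congrArg Fin.val (hE h)
      exact ZMod.val_injective m h2
    edge_mem := fun i => hmem _
    mem_fst := fun i => hfst _
    mem_snd := by
      intro i
      have h : (i + 1).val = (i.val + 1) % m := by
        rw [ZMod.val_add, ZMod.val_one_eq_one_mod, Nat.add_mod i.val 1 m,
          Nat.mod_eq_of_lt (ZMod.val_lt i)]
      have e1 : (⟨(i+1).val, ZMod.val_lt (i+1)⟩ : Fin m)
          = ⟨(i.val + 1) % m, Nat.mod_lt _ hm⟩ := Fin.ext h
      show c ⟨(i+1).val, ZMod.val_lt (i+1)⟩ ∈ E ⟨i.val, ZMod.val_lt i⟩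
      rw [e1]
      exact hsnd ⟨i.val, ZMod.val_lt i⟩ }

end MyAux

lemma myGadget {V : Type*} {H : Finset (Finset V)} {n : ℕ}
    (v : ℕ → V) (e : ℕ → Finset V)
    (hv : ∀ ⦃k l⦄, v k = v l → k ≤ n - 1 → l ≤ n - 1 → k = l)
    (he : ∀ ⦃k l⦄, e k = e l → k ≤ n - 2 → l ≤ n - 2 → k = l)
    (hem : ∀ k, k ≤ n - 2 → e k ∈ H)
    (h1 : ∀ k, k ≤ n - 2 → v k ∈ e k)
    (h2 : ∀ k, k ≤ n - 2 → v (k + 1) ∈ e k)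
    (a b c d : ℕ) (hab : a ≤ b) (hbc : b < c) (hcd : c ≤ d) (hdn : d ≤ n - 1)
    (g f : Finset V) (hgH : g ∈ H) (hfH : f ∈ H) (hgf : g ≠ f)
    (hgb : v b ∈ g) (hgd : v d ∈ g) (hfc : v c ∈ f) (hfa : v a ∈ f)
    (hgne : ∀ j, (a ≤ j ∧ j < b) ∨ (c ≤ j ∧ j < d) → g ≠ e j)
    (hfne : ∀ j, (a ≤ j ∧ j < b) ∨ (c ≤ j ∧ j < d) → f ≠ e j) :
    Nonempty (BergeCycle H ((b - a + 1) + (d - c + 1))) := by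
  set m1 := b - a + 1 with hm1
  set m := m1 + (d - c + 1) with hm
  have hm0 : 0 < m := by omega
  refine ⟨myBuildCycle H m hm0
    (fun k => if k.val < m1 then v (a + k.val) else v (d - (k.val - m1)))
    (fun k => if k.val + 1 < m1 then e (a + k.val)
      else if k.val + 1 = m1 then g
      else if k.val + 1 < m then e (d - (k.val - m1) - 1) else f)
    ?_ ?_ ?_ ?_ ?_⟩
  · -- vtx injective
    intro k l hkl
    have hk := k.isLt; have hl := l.isLt
    dsimp only at hkl
    split_ifs at hkl with p1 p2
    · exact Fin.val_injective (by have := hv hkl (by omega) (by omega); omega)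
    · exact absurd (hv hkl (by omega) (by omega)) (by omega)
    · exact absurd (hv hkl (by omega) (by omega)) (by omega)
    · exact Fin.val_injective (by have := hv hkl (by omega) (by omega); omega)
  · -- edge injective
    intro k l hkl
    have hk := k.isLt; have hl := l.isLt
    dsimp only at hkl
    split_ifs at hkl with p1 p2 p3 p4 p5 p6 p7 p8 p9 p10 p11 p12 p13 p14 p15 p16 p17 p18
    all_goals first
      | exact Fin.val_injective (by omega)
      | exact Fin.val_injective (by have := he hkl (by omega) (by omega); omega)
      | exact absurd (he hkl (by omega) (by omega)) (by omega)
      | exact absurd hkl (hgne _ (by omega))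
      | exact absurd hkl.symm (hgne _ (by omega))
      | exact absurd hkl (hfne _ (by omega))
      | exact absurd hkl.symm (hfne _ (by omega))
      | exact absurd hkl hgf
      | exact absurd hkl.symm hgf
      | exact absurd hkl (fun hh => hgf hh.symm)
  · -- edge mem
    intro k
    have hk := k.isLt
    split_ifs with p1 p2 p3
    · exact hem _ (by omega)
    · exact hgH
    · exact hem _ (by omega)
    · exact hfH
  · -- mem_fst
    intro k
    have hk := k.isLt
    split_ifs with p1 p2 p3 p4 p5 p6 p7
    all_goals first
      | exact h1 _ (by omega)
      | (exfalso; omega)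
      | (have hh : a + k.val = b := (by omega); rw [hh]; exact hgb)
      | (have hh : d - (k.val - m1) - 1 + 1 = d - (k.val - m1) := (by omega)
         have h9 := h2 (d - (k.val - m1) - 1) (by omega)
         rwa [hh] at h9)
      | (have hh : d - (k.val - m1) = c := (by omega); rw [hh]; exact hfc)
  · -- mem_snd
    intro k
    have hk := k.isLt
    dsimp only
    by_cases hKm : k.val + 1 = m
    · have h0 : (k.val + 1) % m = 0 := by rw [hKm, Nat.mod_self]
      simp only [h0]
      split_ifs with p1 p2 p3 p4
      all_goals first
        | (exfalso; omega)
        | (have hh : a + 0 = a := Nat.add_zero a; rw [hh]; exact hfa)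
    · have h0 : (k.val + 1) % m = k.val + 1 := Nat.mod_eq_of_lt (by omega)
      simp only [h0]
      split_ifs with p1 p2 p3 p4
      all_goals first
        | (exfalso; omega)
        | (have hh : a + (k.val + 1) = a + k.val + 1 := (by omega); rw [hh]; exact h2 _ (by omega))
        | (have hh : d - (k.val + 1 - m1) = d := (by omega); rw [hh]; exact hgd)
        | (have hh : d - (k.val + 1 - m1) = d - (k.val - m1) - 1 := (by omega)
           rw [hh]
           exact h1 _ (by omega))

lemma my_ham_of_cycle {V : Type*} [Fintype V] {H : Finset (Finset V)} {n : ℕ}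
    (hn : 0 < n) (hcard : Fintype.card V = n) (C : BergeCycle H n) :
    HamiltonianBergeCycle H := by
  haveI : NeZero n := ⟨hn.ne'⟩
  have hb : Function.Bijective C.vtx := by
    rw [Fintype.bijective_iff_injective_and_card]
    exact ⟨C.vtx_inj, by rw [ZMod.card, hcard]⟩
  exact ⟨n, C, Set.range_eq_univ.mpr hb.2⟩

/-- If a `[3]`-graph satisfying the Ore condition with `d₀ = 2`
has a Hamiltonian Berge path but no Hamiltonian Berge cycle, then it has a
Berge cycle of length `n-1` or `n-2`. -/
theorem stmt4 {V : Type*} [Fintype V] (n : ℕ) (hn : 6 ≤ n)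
    (hcard : Fintype.card V = n) (H : Finset (Finset V)) (h3 : IsThreeGraph H)
    (hOre : ∀ u v : V, u ≠ v → ¬ HAdj H u v →
      n + 2 ≤ shadowDeg H u + shadowDeg H v)
    (hpath : ∃ (t : ℕ) (P : BergePath H t), Set.range P.vtx = Set.univ)
    (hnoham : ¬ HamiltonianBergeCycle H) :
    Nonempty (BergeCycle H (n - 1)) ∨ Nonempty (BergeCycle H (n - 2)) := by
  classical
  obtain ⟨t, P, hP⟩ := hpath
  have hbij : Function.Bijective P.vtx := ⟨P.vtx_inj, Set.range_eq_univ.mp hP⟩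
  have ht : t + 1 = n := by
    have h := Fintype.card_of_bijective hbij
    simpa [hcard] using h
  set v : ℕ → V := fun k => P.vtx ⟨min k t, Nat.lt_succ_of_le (Nat.min_le_right _ _)⟩ with hvdef
  set E : ℕ → Finset V := fun k => P.edge ⟨min k (t-1), by omega⟩ with hEdef
  have hvk : ∀ (k : ℕ), k ≤ t → ∀ (hk : k < t + 1), v k = P.vtx ⟨k, hk⟩ := by
    intro k h hk
    simp only [hvdef]
    congr 1
    exact Fin.ext (min_eq_left h)
  have hEk : ∀ (k : ℕ), k + 1 ≤ t → ∀ (hk : k < t), E k = P.edge ⟨k, hk⟩ := by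
    intro k h hk
    simp only [hEdef]
    congr 1
    exact Fin.ext (min_eq_left (by omega))
  have hv : ∀ ⦃k l : ℕ⦄, v k = v l → k ≤ n - 1 → l ≤ n - 1 → k = l := by
    intro k l h hk hl
    rw [hvk k (by omega) (by omega), hvk l (by omega) (by omega)] at h
    exact congrArg Fin.val (P.vtx_inj h)
  have hE : ∀ ⦃k l : ℕ⦄, E k = E l → k ≤ n - 2 → l ≤ n - 2 → k = l := by
    intro k l h hk hl
    rw [hEk k (by omega) (by omega), hEk l (by omega) (by omega)] at h
    exact congrArg Fin.val (P.edge_inj h)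
  have hEH : ∀ k, k ≤ n - 2 → E k ∈ H := by
    intro k hk
    rw [hEk k (by omega) (by omega)]
    exact P.edge_mem _
  have hfst : ∀ k, k ≤ n - 2 → v k ∈ E k := by
    intro k hk
    rw [hvk k (by omega) (by omega), hEk k (by omega) (by omega)]
    exact P.mem_fst ⟨k, by omega⟩
  have hsnd : ∀ k, k ≤ n - 2 → v (k + 1) ∈ E k := by
    intro k hk
    rw [hvk (k+1) (by omega) (by omega), hEk k (by omega) (by omega)]
    exact P.mem_snd ⟨k, by omega⟩
  have hsurj : ∀ x : V, ∃ k, k ≤ n - 1 ∧ v k = x := by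
    intro x
    obtain ⟨i, hi⟩ := hbij.2 x
    refine ⟨i.val, by have := i.isLt; omega, ?_⟩
    rw [hvk i.val (by have := i.isLt; omega) (by have := i.isLt; omega)]
    exact hi
  have hvne : ∀ {p q : ℕ}, p ≤ n-1 → q ≤ n-1 → p ≠ q → v p ≠ v q :=
    fun hp hq hne h => hne (hv h hp hq)
  by_cases huw : HAdj H (v 0) (v (n-1))
  · obtain ⟨-, e, heH, hue, hwe⟩ := huw
    by_cases hpe : ∃ j, j ≤ n - 2 ∧ e = E j
    · obtain ⟨j, hj, hej⟩ := hpe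
      have hj0 : j = 0 ∨ j = n - 2 := by
        by_contra hcon
        push_neg at hcon
        have h4 : ({v 0, v (n-1), v j, v (j+1)} : Finset V).card = 4 :=
          my_card_four (hvne (by omega) (by omega) (by omega))
            (hvne (by omega) (by omega) (by omega))
            (hvne (by omega) (by omega) (by omega))
            (hvne (by omega) (by omega) (by omega))
            (hvne (by omega) (by omega) (by omega))
            (hvne (by omega) (by omega) (by omega))
        have hsub : ({v 0, v (n-1), v j, v (j+1)} : Finset V) ⊆ e := by
          intro x hx
          simp only [Finset.mem_insert, Finset.mem_singleton] at hx
          rcases hx with rfl | rfl | rfl | rfl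
          · exact hue
          · exact hwe
          · rw [hej]; exact hfst j hj
          · rw [hej]; exact hsnd j hj
        have hle := Finset.card_le_card hsub
        rcases h3 e heH with h | h <;> omega
      rcases hj0 with rfl | rfl
      · have hC := myGadget v E hv hE hEH hfst hsnd 1 (n-2) (n-1) (n-1)
          (by omega) (by omega) (by omega) (by omega)
          (E (n-2)) (E 0) (hEH _ (by omega)) (hEH _ (by omega))
          (fun h => by have := hE h (by omega) (by omega); omega)
          (hfst (n-2) (by omega))
          (by have h9 := hsnd (n-2) (by omega)
              rwa [show n-2+1 = n-1 from by omega] at h9)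
          (by rw [← hej]; exact hwe)
          (hsnd 0 (by omega))
          (by intro j' hj'; intro hh; have := hE hh (by omega) (by omega); omega)
          (by intro j' hj'; intro hh; have := hE hh (by omega) (by omega); omega)
        rw [show (n-2-1+1) + ((n-1) - (n-1) + 1) = n-1 from by omega] at hC
        exact Or.inl hC
      · have hC := myGadget v E hv hE hEH hfst hsnd 0 (n-3) (n-2) (n-2)
          (by omega) (by omega) (by omega) (by omega)
          (E (n-3)) (E (n-2)) (hEH _ (by omega)) (hEH _ (by omega))
          (fun h => by have := hE h (by omega) (by omega); omega)
          (hfst (n-3) (by omega))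
          (by have h9 := hsnd (n-3) (by omega)
              rwa [show n-3+1 = n-2 from by omega] at h9)
          (hfst (n-2) (by omega))
          (by rw [← hej]; exact hue)
          (by intro j' hj'; intro hh; have := hE hh (by omega) (by omega); omega)
          (by intro j' hj'; intro hh; have := hE hh (by omega) (by omega); omega)
        rw [show (n-3-0+1) + ((n-2) - (n-2) + 1) = n-1 from by omega] at hC
        exact Or.inl hC
    · push_neg at hpe
      have hC := myGadget v E hv hE hEH hfst hsnd 0 (n-2) (n-1) (n-1)
          (by omega) (by omega) (by omega) (by omega)
          (E (n-2)) e (hEH _ (by omega)) heH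
          (fun h => hpe (n-2) (by omega) h.symm)
          (hfst (n-2) (by omega))
          (by have h9 := hsnd (n-2) (by omega)
              rwa [show n-2+1 = n-1 from by omega] at h9)
          hwe hue
          (by intro j' hj'; intro hh; have := hE hh (by omega) (by omega); omega)
          (by intro j' hj'; intro hh; exact hpe j' (by omega) hh)
      rw [show (n-2-0+1) + ((n-1) - (n-1) + 1) = n from by omega] at hC
      obtain ⟨C⟩ := hC
      exact absurd (my_ham_of_cycle (by omega) hcard C) hnoham
  · have hune : v 0 ≠ v (n-1) := hvne (by omega) (by omega) (by omega)
    have hOre' := hOre (v 0) (v (n-1)) hune huw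
    have degcard : ∀ x : V, shadowDeg H x
        = ((Finset.range n).filter (fun k => HAdj H x (v k))).card := by
      intro x
      have himg : {y | HAdj H x y}
          = ↑(((Finset.range n).filter (fun k => HAdj H x (v k))).image v) := by
        ext y
        simp only [Set.mem_setOf_eq, Finset.coe_image, Set.mem_image, Finset.mem_coe,
          Finset.mem_filter, Finset.mem_range]
        constructor
        · intro hy
          obtain ⟨k, hk, rfl⟩ := hsurj y
          exact ⟨k, ⟨by omega, hy⟩, rfl⟩
        · rintro ⟨k, ⟨-, hk⟩, rfl⟩
          exact hk
      simp only [shadowDeg]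
      rw [himg, Set.ncard_coe_finset]
      apply Finset.card_image_of_injOn
      intro p hp q hq hpq
      simp only [Finset.coe_filter, Set.mem_setOf_eq, Finset.mem_range] at hp hq
      exact hv hpq (by omega) (by omega)
    rw [degcard, degcard] at hOre'
    have hgood : ∃ i, 2 ≤ i ∧ i ≤ n-2 ∧ HAdj H (v 0) (v i) ∧ HAdj H (v (n-1)) (v (i-1)) := by
      by_contra hno
      push_neg at hno
      set Iu := (Finset.range n).filter (fun k => HAdj H (v 0) (v k)) with hIu
      set Iw := (Finset.range n).filter (fun k => HAdj H (v (n-1)) (v k)) with hIw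
      have hmemu : ∀ k ∈ Iu, 1 ≤ k ∧ k ≤ n-2 := by
        intro k hk
        simp only [hIu, Finset.mem_filter, Finset.mem_range] at hk
        obtain ⟨hkn, hadj⟩ := hk
        constructor
        · rcases Nat.eq_zero_or_pos k with rfl | h
          · exact absurd rfl hadj.1
          · exact h
        · by_contra hcc
          have hkk : k = n-1 := by omega
          rw [hkk] at hadj
          exact huw hadj
      have hmemw : ∀ k ∈ Iw, 1 ≤ k ∧ k ≤ n-2 := by
        intro k hk
        simp only [hIw, Finset.mem_filter, Finset.mem_range] at hk
        obtain ⟨hkn, hadj⟩ := hk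
        constructor
        · rcases Nat.eq_zero_or_pos k with rfl | h
          · exact absurd (my_hadj_comm hadj) huw
          · exact h
        · by_contra hcc
          have hkk : k = n-1 := by omega
          rw [hkk] at hadj
          exact hadj.1 rfl
      have hdisj : Disjoint Iu (Iw.image (· + 1)) := by
        rw [Finset.disjoint_left]
        intro x hxu hxJ
        obtain ⟨k, hk, rfl⟩ := Finset.mem_image.mp hxJ
        have h1u := hmemu _ hxu
        have h1w := hmemw _ hk
        simp only [hIu, Finset.mem_filter, Finset.mem_range] at hxu
        simp only [hIw, Finset.mem_filter, Finset.mem_range] at hk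
        exact hno (k+1) (by omega) (by omega) hxu.2 (by simpa using hk.2)
      have hsub : Iu ∪ Iw.image (· + 1) ⊆ Finset.Ico 1 n := by
        intro x hx
        rcases Finset.mem_union.mp hx with h | h
        · have := hmemu _ h
          simp only [Finset.mem_Ico]; omega
        · obtain ⟨k, hk, rfl⟩ := Finset.mem_image.mp h
          have := hmemw _ hk
          simp only [Finset.mem_Ico]; omega
      have hcard1 := Finset.card_le_card hsub
      rw [Finset.card_union_of_disjoint hdisj, Nat.card_Ico,
        Finset.card_image_of_injective _ (add_left_injective 1)] at hcard1
      omega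
    obtain ⟨i, hi2, hin, hui, hwi⟩ := hgood
    obtain ⟨-, f, hfH, huf, hvif⟩ := hui
    obtain ⟨-, g, hgH, hwg, hvig⟩ := hwi
    have hfg : f ≠ g := by
      intro h
      exact huw ⟨hune, f, hfH, huf, by rw [h]; exact hwg⟩
    have fclass : ∀ j, j ≤ n-2 → j ≠ i-1 → f = E j → j = 0 ∨ j = i := by
      intro j hj hji hfj
      by_contra hcon
      push_neg at hcon
      have h4 : ({v 0, v i, v j, v (j+1)} : Finset V).card = 4 :=
        my_card_four (hvne (by omega) (by omega) (by omega))
          (hvne (by omega) (by omega) (by omega))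
          (hvne (by omega) (by omega) (by omega))
          (hvne (by omega) (by omega) (by omega))
          (hvne (by omega) (by omega) (by omega))
          (hvne (by omega) (by omega) (by omega))
      have hsub : ({v 0, v i, v j, v (j+1)} : Finset V) ⊆ f := by
        intro x hx
        simp only [Finset.mem_insert, Finset.mem_singleton] at hx
        rcases hx with rfl | rfl | rfl | rfl
        · exact huf
        · exact hvif
        · rw [hfj]; exact hfst j hj
        · rw [hfj]; exact hsnd j hj
      have hle := Finset.card_le_card hsub
      rcases h3 f hfH with h | h <;> omega
    have gclass : ∀ j, j ≤ n-2 → j ≠ i-1 → g = E j → j = n-2 ∨ j = i-2 := by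
      intro j hj hji hgj
      by_contra hcon
      push_neg at hcon
      have h4 : ({v (n-1), v (i-1), v j, v (j+1)} : Finset V).card = 4 :=
        my_card_four (hvne (by omega) (by omega) (by omega))
          (hvne (by omega) (by omega) (by omega))
          (hvne (by omega) (by omega) (by omega))
          (hvne (by omega) (by omega) (by omega))
          (hvne (by omega) (by omega) (by omega))
          (hvne (by omega) (by omega) (by omega))
      have hsub : ({v (n-1), v (i-1), v j, v (j+1)} : Finset V) ⊆ g := by
        intro x hx
        simp only [Finset.mem_insert, Finset.mem_singleton] at hx
        rcases hx with rfl | rfl | rfl | rfl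
        · exact hwg
        · exact hvig
        · rw [hgj]; exact hfst j hj
        · rw [hgj]; exact hsnd j hj
      have hle := Finset.card_le_card hsub
      rcases h3 g hgH with h | h <;> omega
    have fstat : (∀ j, j ≤ n-2 → j ≠ i-1 → f ≠ E j) ∨ f = E 0 ∨ f = E i := by
      by_cases hcl : ∀ j, j ≤ n-2 → j ≠ i-1 → f ≠ E j
      · exact Or.inl hcl
      · push_neg at hcl
        obtain ⟨j, hj1, hj2, hj3⟩ := hcl
        rcases fclass j hj1 hj2 hj3 with h | h
        · exact Or.inr (Or.inl (by rw [← h]; exact hj3))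
        · exact Or.inr (Or.inr (by rw [← h]; exact hj3))
    have gstat : (∀ j, j ≤ n-2 → j ≠ i-1 → g ≠ E j) ∨ g = E (n-2) ∨ g = E (i-2) := by
      by_cases hcl : ∀ j, j ≤ n-2 → j ≠ i-1 → g ≠ E j
      · exact Or.inl hcl
      · push_neg at hcl
        obtain ⟨j, hj1, hj2, hj3⟩ := hcl
        rcases gclass j hj1 hj2 hj3 with h | h
        · exact Or.inr (Or.inl (by rw [← h]; exact hj3))
        · exact Or.inr (Or.inr (by rw [← h]; exact hj3))
    rcases fstat with hf | hf | hf <;> rcases gstat with hg | hg | hg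
    · -- f clean, g clean : Hamiltonian cycle, contradiction
      have hC := myGadget v E hv hE hEH hfst hsnd 0 (i-1) i (n-1)
        (by omega) (by omega) (by omega) (by omega)
        g f hgH hfH (fun h => hfg h.symm)
        hvig hwg hvif huf
        (by intro j hj; exact hg j (by omega) (by omega))
        (by intro j hj; exact hf j (by omega) (by omega))
      rw [show (i-1-0+1) + (n-1-i+1) = n from by omega] at hC
      obtain ⟨C⟩ := hC
      exact absurd (my_ham_of_cycle (by omega) hcard C) hnoham
    · -- f clean, g = E (n-2)
      have hC := myGadget v E hv hE hEH hfst hsnd 0 (i-1) i (n-2)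
        (by omega) (by omega) (by omega) (by omega)
        g f hgH hfH (fun h => hfg h.symm)
        hvig (by rw [hg]; exact hfst (n-2) (by omega)) hvif huf
        (by intro j hj; intro hh; rw [hg] at hh; have := hE hh (by omega) (by omega); omega)
        (by intro j hj; exact hf j (by omega) (by omega))
      rw [show (i-1-0+1) + (n-2-i+1) = n-1 from by omega] at hC
      exact Or.inl hC
    · -- f clean, g = E (i-2)
      have hC := myGadget v E hv hE hEH hfst hsnd 0 (i-2) i (n-1)
        (by omega) (by omega) (by omega) (by omega)
        g f hgH hfH (fun h => hfg h.symm)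
        (by rw [hg]; exact hfst (i-2) (by omega)) hwg hvif huf
        (by intro j hj; intro hh; rw [hg] at hh; have := hE hh (by omega) (by omega); omega)
        (by intro j hj; exact hf j (by omega) (by omega))
      rw [show (i-2-0+1) + (n-1-i+1) = n-1 from by omega] at hC
      exact Or.inl hC
    · -- f = E 0, g clean
      have hC := myGadget v E hv hE hEH hfst hsnd 1 (i-1) i (n-1)
        (by omega) (by omega) (by omega) (by omega)
        g f hgH hfH (fun h => hfg h.symm)
        hvig hwg hvif (by rw [hf]; exact hsnd 0 (by omega))
        (by intro j hj; exact hg j (by omega) (by omega))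
        (by intro j hj; intro hh; rw [hf] at hh; have := hE hh (by omega) (by omega); omega)
      rw [show (i-1-1+1) + (n-1-i+1) = n-1 from by omega] at hC
      exact Or.inl hC
    · -- f = E 0, g = E (n-2)
      have hC := myGadget v E hv hE hEH hfst hsnd 1 (i-1) i (n-2)
        (by omega) (by omega) (by omega) (by omega)
        g f hgH hfH (fun h => hfg h.symm)
        hvig (by rw [hg]; exact hfst (n-2) (by omega)) hvif
        (by rw [hf]; exact hsnd 0 (by omega))
        (by intro j hj; intro hh; rw [hg] at hh; have := hE hh (by omega) (by omega); omega)
        (by intro j hj; intro hh; rw [hf] at hh; have := hE hh (by omega) (by omega); omega)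
      rw [show (i-1-1+1) + (n-2-i+1) = n-2 from by omega] at hC
      exact Or.inr hC
    · -- f = E 0, g = E (i-2)
      have hi3 : 3 ≤ i := by
        by_contra hcc
        apply hfg
        rw [hf, hg]
        congr 1
        omega
      have hC := myGadget v E hv hE hEH hfst hsnd 1 (i-2) i (n-1)
        (by omega) (by omega) (by omega) (by omega)
        g f hgH hfH (fun h => hfg h.symm)
        (by rw [hg]; exact hfst (i-2) (by omega)) hwg hvif
        (by rw [hf]; exact hsnd 0 (by omega))
        (by intro j hj; intro hh; rw [hg] at hh; have := hE hh (by omega) (by omega); omega)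
        (by intro j hj; intro hh; rw [hf] at hh; have := hE hh (by omega) (by omega); omega)
      rw [show (i-2-1+1) + (n-1-i+1) = n-2 from by omega] at hC
      exact Or.inr hC
    · -- f = E i, g clean
      have hC := myGadget v E hv hE hEH hfst hsnd 0 (i-1) (i+1) (n-1)
        (by omega) (by omega) (by omega) (by omega)
        g f hgH hfH (fun h => hfg h.symm)
        hvig hwg (by rw [hf]; exact hsnd i (by omega)) huf
        (by intro j hj; exact hg j (by omega) (by omega))
        (by intro j hj; intro hh; rw [hf] at hh; have := hE hh (by omega) (by omega); omega)
      rw [show (i-1-0+1) + (n-1-(i+1)+1) = n-1 from by omega] at hC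
      exact Or.inl hC
    · -- f = E i, g = E (n-2)
      have hi3 : i + 3 ≤ n := by
        by_contra hcc
        apply hfg
        rw [hf, hg]
        congr 1
        omega
      have hC := myGadget v E hv hE hEH hfst hsnd 0 (i-1) (i+1) (n-2)
        (by omega) (by omega) (by omega) (by omega)
        g f hgH hfH (fun h => hfg h.symm)
        hvig (by rw [hg]; exact hfst (n-2) (by omega))
        (by rw [hf]; exact hsnd i (by omega)) huf
        (by intro j hj; intro hh; rw [hg] at hh; have := hE hh (by omega) (by omega); omega)
        (by intro j hj; intro hh; rw [hf] at hh; have := hE hh (by omega) (by omega); omega)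
      rw [show (i-1-0+1) + (n-2-(i+1)+1) = n-2 from by omega] at hC
      exact Or.inr hC
    · -- f = E i, g = E (i-2)
      have hC := myGadget v E hv hE hEH hfst hsnd 0 (i-2) (i+1) (n-1)
        (by omega) (by omega) (by omega) (by omega)
        g f hgH hfH (fun h => hfg h.symm)
        (by rw [hg]; exact hfst (i-2) (by omega)) hwg
        (by rw [hf]; exact hsnd i (by omega)) huf
        (by intro j hj; intro hh; rw [hg] at hh; have := hE hh (by omega) (by omega); omega)
        (by intro j hj; intro hh; rw [hf] at hh; have := hE hh (by omega) (by omega); omega)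
      rw [show (i-2-0+1) + (n-1-(i+1)+1) = n-2 from by omega] at hC
      exact Or.inr hC
end

section
/- Let H be a [3]-graph, let C be a Berge cycle in H, and let u ∈ V(H) − V(C). Then there exists a set U ⊆ V(C) that is usable for u with |U| ≥ d_C(u)/6. -/
/-!
Call `i` free for `u` if some edge through `u` and `v_i` differs from `e_{i-1}`; we take
`U = {i + 1 | i ∈ S}` for a suitable set `S` of free indices. A neighbour `v_i` of `u` that is not
free meets `u` only in `e_{i-1}`, so `i - 1` is free while `i` is not. Hence, for the set `F` of
free indices and the number `p(F)` of `i ∈ F` with `i + 1 ∈ F`, `d_C(u) ≤ |F| + (|F| - p(F))`.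

Two free indices violate condition (3) only if all their free edges coincide; as edges have at
most three vertices and contain `u ∉ V(C)`, these conflicts form a matching on `F`. Greedily
keeping a vertex and deleting it, its two cycle neighbours and its conflict partner yields
an admissible `S` with `2|F| ≤ 6|S| + p(F)`: a step deleting four vertices also deletes two
consecutive pairs.
-/

open Finset

section

variable {α : Type*} [AddGroupWithOne α] [DecidableEq α]

lemma two_mul_card_le_of_subset_union {D X M : Finset α} {v : α} (hDX : D ⊆ X)
    (hD : D ⊆ {v, v + 1, v - 1} ∪ M) (hM : #M ≤ 1) :
    2 * #D ≤ 6 + #(D.filter (· + 1 ∈ X)) := by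
  have hT : #({v, v + 1, v - 1} : Finset α) ≤ 3 := card_le_three
  have hDU : #D ≤ #({v, v + 1, v - 1} : Finset α) + #M :=
    (card_le_card hD).trans (card_union_le _ _)
  by_cases h3 : #D ≤ 3
  · omega
  -- `D` is then all of `{v, v + 1, v - 1} ∪ M`, so `v ± 1 ∈ X` and `v - 1 ≠ v`.
  have hDeq : D = {v, v + 1, v - 1} ∪ M :=
    eq_of_subset_of_card_le hD ((card_union_le _ _).trans (by omega))
  have hvv : v - 1 ≠ v := by
    intro h
    have hT2 : ({v, v + 1, v - 1} : Finset α) = {v, v + 1} := by rw [h]; ext; simp; tauto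
    have := card_le_two (a := v) (b := v + 1)
    rw [hT2] at hDU
    omega
  have hpair : ({v, v - 1} : Finset α) ⊆ D.filter (· + 1 ∈ X) := by
    intro x hx
    simp only [mem_insert, mem_singleton] at hx
    rcases hx with rfl | rfl <;> simp only [mem_filter, sub_add_cancel] <;>
      exact ⟨by simp [hDeq], hDX (by simp [hDeq])⟩
  have := card_le_card hpair
  rw [card_pair hvv.symm] at this
  omega

theorem exists_subset_two_mul_card_le (R : α → α → Prop) (hR : ∀ a b, R a b → R b a)
    (X : Finset α) (hX : ∀ v ∈ X, ∀ w ∈ X, ∀ w' ∈ X, R v w → R v w' → w = w') :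
    ∃ S ⊆ X, (∀ i ∈ S, ∀ j ∈ S, i ≠ j → j ≠ i + 1 ∧ j ≠ i - 1 ∧ ¬ R i j) ∧
      2 * #X ≤ 6 * #S + #(X.filter (· + 1 ∈ X)) := by
  classical
  induction X using Finset.strongInduction with
  | H X ih =>
  rcases X.eq_empty_or_nonempty with rfl | ⟨v, hv⟩
  · exact ⟨∅, by simp⟩
  set D := X.filter (fun w => w = v ∨ w = v + 1 ∨ w = v - 1 ∨ R v w) with hD
  have hDX : D ⊆ X := filter_subset _ _
  have hvD : v ∈ D := mem_filter.2 ⟨hv, Or.inl rfl⟩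
  obtain ⟨S, hSX, hS, hcount⟩ := ih (X \ D) (sdiff_ssubset hDX ⟨v, hvD⟩)
    fun a ha b hb c hc => hX a (sdiff_subset ha) b (sdiff_subset hb) c (sdiff_subset hc)
  have hfar : ∀ j ∈ X \ D, j ≠ v ∧ j ≠ v + 1 ∧ j ≠ v - 1 ∧ ¬ R v j := by
    intro j hj
    simp only [hD, mem_sdiff, mem_filter, not_and, not_or] at hj
    exact hj.2 hj.1
  refine ⟨insert v S, insert_subset hv (hSX.trans sdiff_subset), ?_, ?_⟩
  · intro i hi j hj hij
    rcases mem_insert.1 hi with rfl | hiS <;> rcases mem_insert.1 hj with rfl | hjS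
    · exact absurd rfl hij
    · obtain ⟨-, h1, h2, h3⟩ := hfar j (hSX hjS)
      exact ⟨h1, h2, h3⟩
    · obtain ⟨-, h1, h2, h3⟩ := hfar i (hSX hiS)
      refine ⟨fun h => h2 ?_, fun h => h1 ?_, fun h => h3 (hR _ _ h)⟩
      · rw [h, add_sub_cancel_right]
      · rw [h, sub_add_cancel]
    · exact hS i hiS j hjS hij
  · have hM : #(X.filter (R v)) ≤ 1 := card_le_one.2 fun a ha b hb =>
      hX v hv a (mem_filter.1 ha).1 b (mem_filter.1 hb).1 (mem_filter.1 ha).2 (mem_filter.1 hb).2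
    have hDsub : D ⊆ {v, v + 1, v - 1} ∪ X.filter (R v) := by
      intro w hw
      simp only [hD, mem_filter] at hw
      simp only [mem_union, mem_insert, mem_singleton, mem_filter]
      tauto
    have hDcount := two_mul_card_le_of_subset_union hDX hDsub hM
    have hsplit : #(X \ D) + #D = #X := card_sdiff_add_card_eq_card hDX
    have hpairs : #((X \ D).filter (· + 1 ∈ X \ D)) + #(D.filter (· + 1 ∈ X)) ≤
        #(X.filter (· + 1 ∈ X)) := by
      rw [← card_union_of_disjoint]
      · refine card_le_card (union_subset ?_ (filter_subset_filter _ hDX))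
        intro w hw
        simp only [mem_filter, mem_sdiff] at hw ⊢
        exact ⟨hw.1.1, hw.2.1⟩
      · exact disjoint_filter_filter (sdiff_disjoint)
    have hins : #(insert v S) = #S + 1 :=
      card_insert_of_notMem fun h => (mem_sdiff.1 (hSX h)).2 hvD
    omega

lemma card_le_card_add_card_filter_add_one_notMem {A B : Finset α}
    (h : ∀ i ∈ A, i ∉ B → i - 1 ∈ B) : #A ≤ #B + #(B.filter (· + 1 ∉ B)) := by
  have hin : #(A.filter (· ∈ B)) ≤ #B := card_le_card fun i hi => (mem_filter.1 hi).2
  have hout : #(A.filter (· ∉ B)) ≤ #(B.filter (· + 1 ∉ B)) := by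
    refine card_le_card_of_injOn (· - 1) (fun i hi => ?_) (fun a _ b _ hab => sub_left_inj.1 hab)
    obtain ⟨hiA, hiB⟩ := mem_filter.1 hi
    exact mem_filter.2 ⟨h i hiA hiB, by rwa [sub_add_cancel]⟩
  have := card_filter_add_card_filter_not (s := A) (· ∈ B)
  omega

end

lemma IsThreeGraph.card_le_three {V : Type*} {H : Finset (Finset V)} (h3 : IsThreeGraph H)
    {e : Finset V} (he : e ∈ H) : #e ≤ 3 := by
  rcases h3 e he with h | h <;> omega

namespace BergeCycle

variable {V : Type*} {H : Finset (Finset V)} {t : ℕ} (C : BergeCycle H t) (u : V)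

/-- `e ∈ E(u, v_i) - {e_{i-1}}`: condition (1) of `Usable` for the index `i + 1` asks for one. -/
def FreeEdge (i : ZMod t) (e : Finset V) : Prop :=
  e ∈ H ∧ e ≠ C.edge (i - 1) ∧ u ∈ e ∧ C.vtx i ∈ e

/-- The failure of condition (3) of `Usable` for the indices `i + 1` and `j + 1`. -/
def Conflict (i j : ZMod t) : Prop :=
  i ≠ j ∧ ∀ e e', C.FreeEdge u i e → C.FreeEdge u j e' → e = e'

lemma conflict_symm {i j : ZMod t} (h : C.Conflict u i j) : C.Conflict u j i :=
  ⟨h.1.symm, fun e e' hj hi => (h.2 e' e hi hj).symm⟩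

/-- Two conflicts at `i` would force one edge to contain `u, v_i, v_j, v_k`. -/
lemma eq_of_conflict_of_conflict (h3 : IsThreeGraph H) (hu : u ∉ Set.range C.vtx)
    {i j k : ZMod t} (hi : ∃ e, C.FreeEdge u i e) (hj : ∃ f, C.FreeEdge u j f)
    (hk : ∃ g, C.FreeEdge u k g) (hij : C.Conflict u i j) (hik : C.Conflict u i k) : j = k := by
  classical
  by_contra hjk
  obtain ⟨e, he⟩ := hi
  obtain ⟨f, hf⟩ := hj
  obtain ⟨g, hg⟩ := hk
  obtain rfl := hij.2 e f he hf
  obtain rfl := hik.2 e g he hg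
  have hne : ∀ a b, a ≠ b → C.vtx a ≠ C.vtx b := fun a b hab h => hab (C.vtx_inj h)
  have hu' : ∀ a, u ≠ C.vtx a := fun a h => hu ⟨a, h.symm⟩
  have hsub : ({u, C.vtx i, C.vtx j, C.vtx k} : Finset V) ⊆ e := by
    simp only [insert_subset_iff, singleton_subset_iff]
    exact ⟨he.2.2.1, he.2.2.2, hf.2.2.2, hg.2.2.2⟩
  have h4 : #({u, C.vtx i, C.vtx j, C.vtx k} : Finset V) = 4 := by
    rw [card_insert_of_notMem (by simp [hu']), card_insert_of_notMem
      (by simp [hne i j hij.1, hne i k hik.1]), card_pair (hne j k hjk)]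
  have := card_le_card hsub
  have := h3.card_le_three he.1
  omega

lemma exists_freeEdge_sub_one (h1 : (1 : ZMod t) ≠ 0) {i : ZMod t}
    (hadj : HAdj H u (C.vtx i)) (hi : ¬∃ e, C.FreeEdge u i e) : ∃ e, C.FreeEdge u (i - 1) e := by
  obtain ⟨-, e, heH, hue, hve⟩ := hadj
  have he : e = C.edge (i - 1) := by
    by_contra hne
    exact hi ⟨e, heH, hne, hue, hve⟩
  refine ⟨e, heH, fun h => h1 ?_, hue, he ▸ C.mem_fst _⟩
  have := C.edge_inj (he.symm.trans h)
  linear_combination this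

lemma dC_le_card_add_card_filter [NeZero t] (h1 : (1 : ZMod t) ≠ 0) (F : Finset (ZMod t))
    (hF : ∀ i, (∃ e, C.FreeEdge u i e) → i ∈ F) : C.dC u ≤ #F + #(F.filter (· + 1 ∉ F)) := by
  classical
  have hdC : C.dC u = #(univ.filter fun i => HAdj H u (C.vtx i)) := by
    rw [dC, ← Set.ncard_coe_finset, coe_filter, ← Set.ncard_image_of_injective _ C.vtx_inj]
    congr 1
    ext v
    constructor
    · rintro ⟨⟨i, rfl⟩, h⟩
      exact ⟨i, by simpa using h, rfl⟩
    · rintro ⟨i, h, rfl⟩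
      exact ⟨⟨i, rfl⟩, by simpa using h⟩
  rw [hdC]
  refine card_le_card_add_card_filter_add_one_notMem fun i hi hiF => hF _ ?_
  exact C.exists_freeEdge_sub_one u h1 (mem_filter.1 hi).2 fun h => hiF (hF i h)

lemma usable_image_add_one (S : Finset (ZMod t)) (hfree : ∀ i ∈ S, ∃ e, C.FreeEdge u i e)
    (hind : ∀ i ∈ S, ∀ j ∈ S, i ≠ j → j ≠ i + 1 ∧ j ≠ i - 1 ∧ ¬ C.Conflict u i j) :
    Usable C u (S.image (· + 1) : Set (ZMod t)) := by
  classical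
  have shift : ∀ i : ZMod t, i + 1 - 2 = i - 1 := fun i => by ring
  simp only [Usable, coe_image, Set.forall_mem_image, mem_coe, shift, add_sub_cancel_right]
  refine ⟨fun i hi => ?_, fun i hi j hj hij => ?_, fun i hi j hj hij => ?_⟩
  · obtain ⟨e, he⟩ := hfree i hi
    exact ⟨e, he⟩
  · obtain ⟨h1, h2, -⟩ := hind i hi j hj (fun h => hij (by rw [h]))
    exact ⟨fun h => h1 (add_right_cancel h), fun h => h2 (eq_sub_of_add_eq h)⟩
  · have hne : i ≠ j := fun h => hij (by rw [h])
    obtain ⟨-, -, hnc⟩ := hind i hi j hj hne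
    simp only [Conflict, not_and, not_forall, exists_prop] at hnc
    obtain ⟨e, e', he, he', hee'⟩ := hnc hne
    exact ⟨e, he.1, e', he'.1, hee', he.2.1, he.2.2.1, he.2.2.2, he'.2.1, he'.2.2.1, he'.2.2.2⟩

end BergeCycle

theorem stmt5_general {V : Type*} (H : Finset (Finset V)) (h3 : IsThreeGraph H)
    {t : ℕ} (ht : 3 ≤ t) (C : BergeCycle H t)
    (u : V) (hu : u ∉ Set.range C.vtx) :
    ∃ U : Set (ZMod t), Usable C u U ∧ (C.dC u : ℚ) / 6 ≤ U.ncard := by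
  classical
  have : NeZero t := ⟨by omega⟩
  have h1 : (1 : ZMod t) ≠ 0 := by
    have : Fact (1 < t) := ⟨by omega⟩
    exact one_ne_zero
  set F := univ.filter fun i => ∃ e, C.FreeEdge u i e
  have hF : ∀ i ∈ F, ∃ e, C.FreeEdge u i e := fun i hi => (mem_filter.1 hi).2
  obtain ⟨S, hSF, hind, hcount⟩ := exists_subset_two_mul_card_le (C.Conflict u)
    (fun _ _ => C.conflict_symm u) F fun i hi j hj k hk =>
      C.eq_of_conflict_of_conflict u h3 hu (hF i hi) (hF j hj) (hF k hk)
  refine ⟨S.image (· + 1), C.usable_image_add_one u S (fun i hi => hF i (hSF hi)) hind, ?_⟩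
  have hdC := C.dC_le_card_add_card_filter u h1 F fun i hi => mem_filter.2 ⟨mem_univ i, hi⟩
  have hsplit := card_filter_add_card_filter_not (s := F) (· + 1 ∈ F)
  rw [Set.ncard_coe_finset, card_image_of_injective _ (add_left_injective 1),
    div_le_iff₀ (by norm_num)]
  exact_mod_cast (by omega : C.dC u ≤ #S * 6)

/-- For any Berge cycle `C` in a `[3]`-graph and any vertex
`u ∉ V(C)`, there is a set usable for `u` of size at least `d_C(u)/6`. -/
theorem stmt5 {V : Type*} [Fintype V] (H : Finset (Finset V)) (h3 : IsThreeGraph H)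
    {t : ℕ} (ht : 3 ≤ t) (C : BergeCycle H t)
    (u : V) (hu : u ∉ Set.range C.vtx) :
    ∃ U : Set (ZMod t), Usable C u U ∧ (C.dC u : ℚ) / 6 ≤ U.ncard :=
  stmt5_general H h3 ht C u hu
end

section
/- Let H be a [3]-graph, let C = v_1, e_1, ..., v_ℓ, e_ℓ, v_1 be a maximal Berge cycle in H, let u ∈ V(H) − V(C), and let U ⊆ V(C) be a usable set for u. For any v_i, v_j ∈ U, if v_i and v_j are adjacent, then E(v_i, v_j) ⊆ {e_i, e_j}. -/
lemma cast_val_eq {t : ℕ} [NeZero t] (a : ZMod t) : ((a.val : ℕ) : ZMod t) = a := by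
  rw [ZMod.natCast_val, ZMod.cast_id]

lemma cast_inj_of_lt {t : ℕ} [NeZero t] {a b : ℕ} (ha : a < t) (hb : b < t)
    (h : (a : ZMod t) = b) : a = b := by
  have h1 := ZMod.val_cast_of_lt ha
  have h2 := ZMod.val_cast_of_lt hb
  rw [h] at h1; omega

lemma cast_ne_zero_of {t : ℕ} [NeZero t] {a : ℕ} (h1 : 0 < a) (h2 : a < t) :
    (a : ZMod t) ≠ 0 := by
  intro h
  have := ZMod.val_cast_of_lt h2
  rw [h, ZMod.val_zero] at this; omega

lemma four_le_card {V : Type*} [DecidableEq V] {g : Finset V} {a b c d : V}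
    (ha : a ∈ g) (hb : b ∈ g) (hc : c ∈ g) (hd : d ∈ g)
    (hab : a ≠ b) (hac : a ≠ c) (had : a ≠ d) (hbc : b ≠ c) (hbd : b ≠ d) (hcd : c ≠ d) :
    4 ≤ g.card := by
  have hsub : ({a, b, c, d} : Finset V) ⊆ g := by
    intro x hx
    simp only [Finset.mem_insert, Finset.mem_singleton] at hx
    rcases hx with rfl|rfl|rfl|rfl <;> assumption
  have h4 : ({a, b, c, d} : Finset V).card = 4 := by
    rw [Finset.card_insert_of_notMem (by simp [hab, hac, had]),
        Finset.card_insert_of_notMem (by simp [hbc, hbd]),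
        Finset.card_insert_of_notMem (by simp [hcd]), Finset.card_singleton]
  have := Finset.card_le_card hsub
  omega

lemma val_add_one_of_lt {t : ℕ} [NeZero t] {p : ZMod t} (h : p.val + 1 < t) :
    (p + 1).val = p.val + 1 := by
  rw [ZMod.val_add]
  have h1 : (1 : ZMod t).val = 1 := ZMod.val_one_eq_one_mod t ▸ Nat.mod_eq_of_lt (by omega)
  rw [h1, Nat.mod_eq_of_lt (by omega)]

def zdel {t : ℕ} (j a : ZMod t) : ℕ := (a - j).val

lemma zdel_inj {t : ℕ} [NeZero t] {j a b : ZMod t} (h : zdel j a = zdel j b) : a = b := by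
  have := ZMod.val_injective t h
  exact sub_left_injective this

lemma zdel_add {t : ℕ} [NeZero t] (j : ZMod t) {r : ℕ} (hr : r < t) :
    zdel j (j + (r : ZMod t)) = r := by
  unfold zdel
  rw [add_sub_cancel_left, ZMod.val_cast_of_lt hr]

lemma zdel_sub {t : ℕ} [NeZero t] (j : ZMod t) {s : ℕ} (hs1 : 1 ≤ s) (hs2 : s < t) :
    zdel j (j - (s : ZMod t)) = t - s := by
  unfold zdel
  rw [sub_sub_cancel_left, ZMod.neg_val', ZMod.val_cast_of_lt hs2,
    Nat.mod_eq_of_lt (by omega)]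

def newVtx {V : Type*} {H : Finset (Finset V)} {t : ℕ} (C : BergeCycle H t)
    (u : V) (j : ZMod t) (m : ℕ) (p : ZMod (t+1)) : V :=
  if p = 0 then u
  else if p.val ≤ m + 1 then C.vtx (j - (p.val : ZMod t))
  else C.vtx (j + ((p.val - (m+2) : ℕ) : ZMod t))

def newEdge {V : Type*} {H : Finset (Finset V)} {t : ℕ} (C : BergeCycle H t)
    (j : ZMod t) (m : ℕ) (e e₁ e₂ : Finset V) (p : ZMod (t+1)) : Finset V :=
  if p = 0 then e₂
  else if p.val ≤ m then C.edge (j - ((p.val + 1 : ℕ) : ZMod t))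
  else if p.val = m + 1 then e
  else if p.val ≤ t - 1 then C.edge (j + ((p.val - (m+2) : ℕ) : ZMod t))
  else e₁

section
variable {V : Type*} {H : Finset (Finset V)} {t : ℕ} (C : BergeCycle H t)
  (u : V) (j : ZMod t) (m : ℕ) (e e₁ e₂ : Finset V) {p : ZMod (t+1)}

lemma newVtx_zero : newVtx C u j m 0 = u := by simp [newVtx]

lemma nvz {p : ZMod (t+1)} (h : p ≠ 0) : 1 ≤ p.val := by
  rcases Nat.eq_zero_or_pos p.val with h0 | h1
  · exact absurd ((ZMod.val_eq_zero p).mp h0) h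
  · omega

lemma newVtx_back (hp : p ≠ 0) (h : p.val ≤ m+1) :
    newVtx C u j m p = C.vtx (j - (p.val : ZMod t)) := by
  simp [newVtx, hp, h]

lemma newVtx_fwd (h : m+1 < p.val) :
    newVtx C u j m p = C.vtx (j + ((p.val - (m+2) : ℕ) : ZMod t)) := by
  have hp : p ≠ 0 := by
    intro h0; rw [h0, ZMod.val_zero] at h; omega
  simp [newVtx, hp, Nat.not_le.mpr h]

lemma newEdge_zero : newEdge C j m e e₁ e₂ 0 = e₂ := by simp [newEdge]

lemma newEdge_back (hp : p ≠ 0) (h : p.val ≤ m) :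
    newEdge C j m e e₁ e₂ p = C.edge (j - ((p.val + 1 : ℕ) : ZMod t)) := by
  simp [newEdge, hp, h]

lemma newEdge_mid (hp : p ≠ 0) (h : p.val = m + 1) :
    newEdge C j m e e₁ e₂ p = e := by
  simp [newEdge, hp, h]

lemma newEdge_fwd (h1 : m + 1 < p.val) (h2 : p.val ≤ t - 1) :
    newEdge C j m e e₁ e₂ p = C.edge (j + ((p.val - (m+2) : ℕ) : ZMod t)) := by
  have hp : p ≠ 0 := by intro h0; rw [h0, ZMod.val_zero] at h1; omega
  simp [newEdge, hp, Nat.not_le.mpr (show m < p.val by omega), (show p.val ≠ m + 1 by omega), h2]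

lemma newEdge_last (h1 : m + 1 < p.val) (h2 : t - 1 < p.val) :
    newEdge C j m e e₁ e₂ p = e₁ := by
  have hp : p ≠ 0 := by intro h0; rw [h0, ZMod.val_zero] at h1; omega
  simp [newEdge, hp, Nat.not_le.mpr (show m < p.val by omega), (show p.val ≠ m + 1 by omega),
    Nat.not_le.mpr h2]
end

lemma extend_cycle {V : Type*} {H : Finset (Finset V)} {t : ℕ}
    (h3 : IsThreeGraph H) (C : BergeCycle H t) (u : V) (hu : u ∉ Set.range C.vtx)
    (i j : ZMod t) (ht : 4 ≤ t)
    (hij : i ≠ j) (hji1 : j ≠ i + 1) (hji2 : j ≠ i - 1)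
    {e e₁ e₂ : Finset V}
    (he : e ∈ H) (hvi : C.vtx i ∈ e) (hvj : C.vtx j ∈ e)
    (he1 : e₁ ∈ H) (he1u : u ∈ e₁) (he1v : C.vtx (i-1) ∈ e₁) (he1ne : e₁ ≠ C.edge (i-2))
    (he2 : e₂ ∈ H) (he2u : u ∈ e₂) (he2v : C.vtx (j-1) ∈ e₂) (he2ne : e₂ ≠ C.edge (j-2))
    (h12 : e₁ ≠ e₂)
    (hEi : e ≠ C.edge i) (hEj : e ≠ C.edge j) :
    ∃ (C' : BergeCycle H (t+1)), Set.range C'.vtx = insert u (Set.range C.vtx) := by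
  classical
  haveI : NeZero t := ⟨by omega⟩
  set m := (j - 1 - i).val with hm_def
  set n := (i - 1 - j).val with hn_def
  have hmc : ((m : ℕ) : ZMod t) = j - 1 - i := cast_val_eq _
  have hnc : ((n : ℕ) : ZMod t) = i - 1 - j := cast_val_eq _
  have hmlt : m < t := ZMod.val_lt _
  have hnlt : n < t := ZMod.val_lt _
  clear_value m n
  have hm1 : 1 ≤ m := by
    rcases Nat.eq_zero_or_pos m with h0 | h1
    · exfalso; apply hji1
      have : j - 1 - i = 0 := by rw [← hmc, h0, Nat.cast_zero]
      linear_combination this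
    · exact h1
  have hn1 : 1 ≤ n := by
    rcases Nat.eq_zero_or_pos n with h0 | h1
    · exfalso; apply hji2
      have : i - 1 - j = 0 := by rw [← hnc, h0, Nat.cast_zero]
      linear_combination -this
    · exact h1
  have hmne : m ≠ t - 1 := by
    intro h
    apply hij
    have h2 : ((m : ℕ) : ZMod t) = ((t:ℕ) : ZMod t) - 1 := by
      rw [h, Nat.cast_sub (by omega : 1 ≤ t)]; norm_num
    rw [ZMod.natCast_self] at h2
    rw [h2] at hmc
    linear_combination hmc
  have hmn : m + n = t - 2 := by
    have hc2 : ((m + n : ℕ) : ZMod t) = ((t - 2 : ℕ) : ZMod t) := by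
      rw [Nat.cast_add, hmc, hnc, Nat.cast_sub (by omega : 2 ≤ t), ZMod.natCast_self]
      ring
    have h4 := (ZMod.natCast_eq_natCast_iff' _ _ _).mp hc2
    have h5 : (t - 2) % t = t - 2 := Nat.mod_eq_of_lt (by omega)
    rw [h5] at h4
    rcases lt_or_ge (m + n) t with hlt | hge
    · rw [Nat.mod_eq_of_lt hlt] at h4; omega
    · rw [Nat.mod_eq_sub_mod hge, Nat.mod_eq_of_lt (by omega)] at h4; omega
  -- canonical positions
  have hIc : i = j + ((n + 1 : ℕ) : ZMod t) := by push_cast; rw [hnc]; ring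
  have hI1 : i - 1 = j + ((n : ℕ) : ZMod t) := by rw [hnc]; ring
  have hI2 : i - 2 = j + ((n - 1 : ℕ) : ZMod t) := by
    rw [Nat.cast_sub hn1, hnc]; push_cast; ring
  have hJ1 : j - 1 = j - ((1 : ℕ) : ZMod t) := by norm_num
  have hJ2 : j - 2 = j - ((2 : ℕ) : ZMod t) := by norm_num
  -- basic distinctness
  have hone : (1 : ZMod t) ≠ 0 := by
    have := cast_ne_zero_of (t := t) (a := 1) one_pos (by omega)
    simpa using this
  have hu_ne : ∀ a : ZMod t, u ≠ C.vtx a := fun a h => hu ⟨a, h.symm⟩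
  have ecard : ∀ g ∈ H, g.card ≤ 3 := fun g hg => by rcases h3 g hg with h | h <;> omega
  have vne : ∀ a b : ZMod t, a ≠ b → C.vtx a ≠ C.vtx b := fun a b hab h => hab (C.vtx_inj h)
  have hkk : ∀ k : ZMod t, k ≠ k + 1 := by
    intro k h
    apply hone
    linear_combination -h
  -- classification lemmas
  have classify : ∀ (g : Finset V) (a b : ZMod t), g ∈ H → C.vtx a ∈ g → C.vtx b ∈ g →
      a ≠ b → ∀ k : ZMod t, g = C.edge k → a = k ∨ a = k + 1 ∨ b = k ∨ b = k + 1 := by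
    intro g a b hg hga hgb hab k hk
    by_contra hcon
    push_neg at hcon
    obtain ⟨h1, h2, h3', h4⟩ := hcon
    have hk1 : C.vtx k ∈ g := by rw [hk]; exact C.mem_fst k
    have hk2 : C.vtx (k + 1) ∈ g := by rw [hk]; exact C.mem_snd k
    have h5 := four_le_card hga hgb hk1 hk2 (vne _ _ hab) (vne _ _ h1) (vne _ _ h2)
      (vne _ _ h3') (vne _ _ h4) (vne _ _ (hkk k))
    have h6 := ecard g hg
    omega
  have classifyU : ∀ (g : Finset V) (a : ZMod t), g ∈ H → u ∈ g → C.vtx a ∈ g →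
      ∀ k : ZMod t, g = C.edge k → a = k ∨ a = k + 1 := by
    intro g a hg hgu hga k hk
    by_contra hcon
    push_neg at hcon
    obtain ⟨h1, h2⟩ := hcon
    have hk1 : C.vtx k ∈ g := by rw [hk]; exact C.mem_fst k
    have hk2 : C.vtx (k + 1) ∈ g := by rw [hk]; exact C.mem_snd k
    have h5 := four_le_card hgu hga hk1 hk2 (hu_ne a) (hu_ne k) (hu_ne (k + 1))
      (vne _ _ h1) (vne _ _ h2) (vne _ _ (hkk k))
    have h6 := ecard g hg
    omega
  -- distinctness facts
  have F1 : ∀ s : ℕ, 1 ≤ s → s ≤ m → e₂ ≠ C.edge (j - ((s + 1 : ℕ) : ZMod t)) := by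
    intro s hs1 hs2 hEq
    rcases classifyU e₂ (j - 1) he2 he2u he2v _ hEq with h | h
    · have h2 : j - ((1 : ℕ) : ZMod t) = j - ((s + 1 : ℕ) : ZMod t) := by
        rw [← hJ1]; exact h
      have h3 := congrArg (zdel j) h2
      rw [zdel_sub j (by omega) (by omega), zdel_sub j (by omega) (by omega)] at h3
      omega
    · have hk : j - ((s + 1 : ℕ) : ZMod t) = j - 2 := by linear_combination -h
      exact he2ne (by rw [hEq, hk])
  have F2 : e₂ ≠ e := by
    intro hEq
    have h5 := four_le_card he2u (hEq ▸ hvi) (hEq ▸ hvj) he2v (hu_ne i) (hu_ne j)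
      (hu_ne (j - 1)) (vne _ _ hij)
      (vne _ _ (fun h => hji1 (by linear_combination -h)))
      (vne _ _ (fun h => hone (by linear_combination h)))
    have h6 := ecard e₂ he2
    omega
  have F3 : ∀ r : ℕ, r ≤ n - 1 → e₂ ≠ C.edge (j + ((r : ℕ) : ZMod t)) := by
    intro r hr hEq
    rcases classifyU e₂ (j - 1) he2 he2u he2v _ hEq with h | h
    · have h2 : j - ((1 : ℕ) : ZMod t) = j + ((r : ℕ) : ZMod t) := by rw [← hJ1]; exact h
      have h3 := congrArg (zdel j) h2
      rw [zdel_sub j (by omega) (by omega), zdel_add j (by omega)] at h3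
      omega
    · have h2 : j - ((2 : ℕ) : ZMod t) = j + ((r : ℕ) : ZMod t) := by
        rw [← hJ2]; linear_combination h
      have h3 := congrArg (zdel j) h2
      rw [zdel_sub j (by omega) (by omega), zdel_add j (by omega)] at h3
      omega
  have F5 : ∀ s : ℕ, 1 ≤ s → s ≤ m → e ≠ C.edge (j - ((s + 1 : ℕ) : ZMod t)) := by
    intro s hs1 hs2 hEq
    rcases classify e i j he hvi hvj hij _ hEq with h | h | h | h
    · rw [← h] at hEq; exact hEi hEq
    · have h2 : j + ((n : ℕ) : ZMod t) = j - ((s + 1 : ℕ) : ZMod t) := by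
        rw [← hI1]; linear_combination h
      have h3 := congrArg (zdel j) h2
      rw [zdel_add j (by omega), zdel_sub j (by omega) (by omega)] at h3
      omega
    · have h3 := congrArg (zdel j) h
      rw [zdel_sub j (by omega) (by omega)] at h3
      have h4 : zdel j j = 0 := by
        have := zdel_add j (show 0 < t by omega)
        simpa using this
      omega
    · have h2 : j - ((1 : ℕ) : ZMod t) = j - ((s + 1 : ℕ) : ZMod t) := by
        rw [← hJ1]; linear_combination h
      have h3 := congrArg (zdel j) h2
      rw [zdel_sub j (by omega) (by omega), zdel_sub j (by omega) (by omega)] at h3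
      omega
  have F7 : ∀ r : ℕ, r ≤ n - 1 → e ≠ C.edge (j + ((r : ℕ) : ZMod t)) := by
    intro r hr hEq
    rcases classify e i j he hvi hvj hij _ hEq with h | h | h | h
    · have h2 : j + ((n + 1 : ℕ) : ZMod t) = j + ((r : ℕ) : ZMod t) := by
        rw [← hIc]; exact h
      have h3 := congrArg (zdel j) h2
      rw [zdel_add j (by omega), zdel_add j (by omega)] at h3
      omega
    · have h2 : j + ((n : ℕ) : ZMod t) = j + ((r : ℕ) : ZMod t) := by
        rw [← hI1]; linear_combination h
      have h3 := congrArg (zdel j) h2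
      rw [zdel_add j (by omega), zdel_add j (by omega)] at h3
      omega
    · rw [← h] at hEq
      exact hEj hEq
    · have h2 : j - ((1 : ℕ) : ZMod t) = j + ((r : ℕ) : ZMod t) := by
        rw [← hJ1]; linear_combination h
      have h3 := congrArg (zdel j) h2
      rw [zdel_sub j (by omega) (by omega), zdel_add j (by omega)] at h3
      omega
  have F8 : e ≠ e₁ := by
    intro hEq
    have h5 := four_le_card (hEq ▸ he1u) hvi hvj (hEq ▸ he1v) (hu_ne i) (hu_ne j)
      (hu_ne (i - 1)) (vne _ _ hij)
      (vne _ _ (fun h => hone (by linear_combination h)))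
      (vne _ _ (fun h => hji2 h))
    have h6 := ecard e he
    omega
  have F6 : ∀ s : ℕ, 1 ≤ s → s ≤ m → e₁ ≠ C.edge (j - ((s + 1 : ℕ) : ZMod t)) := by
    intro s hs1 hs2 hEq
    rcases classifyU e₁ (i - 1) he1 he1u he1v _ hEq with h | h
    · have h2 : j + ((n : ℕ) : ZMod t) = j - ((s + 1 : ℕ) : ZMod t) := by
        rw [← hI1]; exact h
      have h3 := congrArg (zdel j) h2
      rw [zdel_add j (by omega), zdel_sub j (by omega) (by omega)] at h3
      omega
    · have hk : j - ((s + 1 : ℕ) : ZMod t) = i - 2 := by linear_combination -h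
      exact he1ne (by rw [hEq, hk])
  have F9 : ∀ r : ℕ, r ≤ n - 1 → e₁ ≠ C.edge (j + ((r : ℕ) : ZMod t)) := by
    intro r hr hEq
    rcases classifyU e₁ (i - 1) he1 he1u he1v _ hEq with h | h
    · have h2 : j + ((n : ℕ) : ZMod t) = j + ((r : ℕ) : ZMod t) := by
        rw [← hI1]; exact h
      have h3 := congrArg (zdel j) h2
      rw [zdel_add j (by omega), zdel_add j (by omega)] at h3
      omega
    · have hk : j + ((r : ℕ) : ZMod t) = i - 2 := by linear_combination -h
      exact he1ne (by rw [hEq, hk])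
  have F10 : ∀ s r : ℕ, 1 ≤ s → s ≤ m → r ≤ n - 1 →
      j - ((s + 1 : ℕ) : ZMod t) ≠ j + ((r : ℕ) : ZMod t) := by
    intro s r hs1 hs2 hr h
    have h3 := congrArg (zdel j) h
    rw [zdel_sub j (by omega) (by omega), zdel_add j (by omega)] at h3
    omega
  have vne0 : ∀ p : ZMod (t+1), 1 ≤ p.val → p ≠ 0 := by
    intro p h h0; rw [h0, ZMod.val_zero] at h; omega
  have branch : ∀ p : ZMod (t+1), p = 0 ∨ (1 ≤ p.val ∧ p.val ≤ m) ∨ p.val = m + 1 ∨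
      (m + 2 ≤ p.val ∧ p.val ≤ t - 1) ∨ p.val = t := by
    intro p
    by_cases hp : p = 0
    · exact Or.inl hp
    · have h1 := nvz hp
      have h2 : p.val < t + 1 := ZMod.val_lt p
      exact Or.inr (by omega)
  have him : j - (((m + 1 : ℕ)) : ZMod t) = i := by push_cast; rw [hmc]; ring
  refine ⟨⟨newVtx C u j m, newEdge C j m e e₁ e₂, ?_, ?_, ?_, ?_, ?_⟩, ?_⟩
  · -- vtx_inj
    intro p q hpq
    by_cases hp : p = 0 <;> by_cases hq : q = 0
    · rw [hp, hq]
    · exfalso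
      rw [hp, newVtx_zero] at hpq
      rcases le_or_gt q.val (m+1) with h | h
      · rw [newVtx_back C u j m hq h] at hpq; exact hu_ne _ hpq
      · rw [newVtx_fwd C u j m h] at hpq; exact hu_ne _ hpq
    · exfalso
      rw [hq, newVtx_zero] at hpq
      rcases le_or_gt p.val (m+1) with h | h
      · rw [newVtx_back C u j m hp h] at hpq; exact hu_ne _ hpq.symm
      · rw [newVtx_fwd C u j m h] at hpq; exact hu_ne _ hpq.symm
    · have hp1 := nvz hp
      have hq1 := nvz hq
      have hpv : p.val < t + 1 := ZMod.val_lt p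
      have hqv : q.val < t + 1 := ZMod.val_lt q
      apply ZMod.val_injective
      rcases le_or_gt p.val (m+1) with h | h <;> rcases le_or_gt q.val (m+1) with h' | h'
      · rw [newVtx_back C u j m hp h, newVtx_back C u j m hq h'] at hpq
        have h2 := congrArg (zdel j) (C.vtx_inj hpq)
        rw [zdel_sub j (by omega) (by omega), zdel_sub j (by omega) (by omega)] at h2
        omega
      · rw [newVtx_back C u j m hp h, newVtx_fwd C u j m h'] at hpq
        have h2 := congrArg (zdel j) (C.vtx_inj hpq)
        rw [zdel_sub j (by omega) (by omega), zdel_add j (by omega)] at h2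
        omega
      · rw [newVtx_fwd C u j m h, newVtx_back C u j m hq h'] at hpq
        have h2 := congrArg (zdel j) (C.vtx_inj hpq)
        rw [zdel_add j (by omega), zdel_sub j (by omega) (by omega)] at h2
        omega
      · rw [newVtx_fwd C u j m h, newVtx_fwd C u j m h'] at hpq
        have h2 := congrArg (zdel j) (C.vtx_inj hpq)
        rw [zdel_add j (by omega), zdel_add j (by omega)] at h2
        omega
  · -- edge_inj
    intro p q hpq
    rcases branch p with hp | hp | hp | hp | hp <;> rcases branch q with hq | hq | hq | hq | hq
    · rw [hp, hq]
    · rw [hp, newEdge_zero, newEdge_back C j m e e₁ e₂ (vne0 q hq.1) hq.2] at hpq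
      exact absurd hpq (F1 q.val hq.1 hq.2)
    · rw [hp, newEdge_zero, newEdge_mid C j m e e₁ e₂ (vne0 q (by omega)) hq] at hpq
      exact absurd hpq F2
    · rw [hp, newEdge_zero, newEdge_fwd C j m e e₁ e₂ (by omega) hq.2] at hpq
      exact absurd hpq (F3 (q.val - (m+2)) (by omega))
    · rw [hp, newEdge_zero, newEdge_last C j m e e₁ e₂ (by omega) (by omega)] at hpq
      exact absurd hpq.symm h12
    · rw [hq, newEdge_zero, newEdge_back C j m e e₁ e₂ (vne0 p hp.1) hp.2] at hpq
      exact absurd hpq.symm (F1 p.val hp.1 hp.2)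
    · rw [newEdge_back C j m e e₁ e₂ (vne0 p hp.1) hp.2,
        newEdge_back C j m e e₁ e₂ (vne0 q hq.1) hq.2] at hpq
      apply ZMod.val_injective
      have h2 := congrArg (zdel j) (C.edge_inj hpq)
      rw [zdel_sub j (by omega) (by omega), zdel_sub j (by omega) (by omega)] at h2
      omega
    · rw [newEdge_back C j m e e₁ e₂ (vne0 p hp.1) hp.2,
        newEdge_mid C j m e e₁ e₂ (vne0 q (by omega)) hq] at hpq
      exact absurd hpq.symm (F5 p.val hp.1 hp.2)
    · rw [newEdge_back C j m e e₁ e₂ (vne0 p hp.1) hp.2,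
        newEdge_fwd C j m e e₁ e₂ (by omega) hq.2] at hpq
      exact absurd (C.edge_inj hpq) (F10 p.val (q.val - (m+2)) hp.1 hp.2 (by omega))
    · rw [newEdge_back C j m e e₁ e₂ (vne0 p hp.1) hp.2,
        newEdge_last C j m e e₁ e₂ (by omega) (by omega)] at hpq
      exact absurd hpq.symm (F6 p.val hp.1 hp.2)
    · rw [hq, newEdge_zero, newEdge_mid C j m e e₁ e₂ (vne0 p (by omega)) hp] at hpq
      exact absurd hpq.symm F2
    · rw [newEdge_mid C j m e e₁ e₂ (vne0 p (by omega)) hp,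
        newEdge_back C j m e e₁ e₂ (vne0 q hq.1) hq.2] at hpq
      exact absurd hpq (F5 q.val hq.1 hq.2)
    · apply ZMod.val_injective; omega
    · rw [newEdge_mid C j m e e₁ e₂ (vne0 p (by omega)) hp,
        newEdge_fwd C j m e e₁ e₂ (by omega) hq.2] at hpq
      exact absurd hpq (F7 (q.val - (m+2)) (by omega))
    · rw [newEdge_mid C j m e e₁ e₂ (vne0 p (by omega)) hp,
        newEdge_last C j m e e₁ e₂ (by omega) (by omega)] at hpq
      exact absurd hpq F8
    · rw [hq, newEdge_zero, newEdge_fwd C j m e e₁ e₂ (by omega) hp.2] at hpq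
      exact absurd hpq.symm (F3 (p.val - (m+2)) (by omega))
    · rw [newEdge_fwd C j m e e₁ e₂ (by omega) hp.2,
        newEdge_back C j m e e₁ e₂ (vne0 q hq.1) hq.2] at hpq
      exact absurd (C.edge_inj hpq).symm (F10 q.val (p.val - (m+2)) hq.1 hq.2 (by omega))
    · rw [newEdge_fwd C j m e e₁ e₂ (by omega) hp.2,
        newEdge_mid C j m e e₁ e₂ (vne0 q (by omega)) hq] at hpq
      exact absurd hpq.symm (F7 (p.val - (m+2)) (by omega))
    · rw [newEdge_fwd C j m e e₁ e₂ (by omega) hp.2,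
        newEdge_fwd C j m e e₁ e₂ (by omega) hq.2] at hpq
      apply ZMod.val_injective
      have h2 := congrArg (zdel j) (C.edge_inj hpq)
      rw [zdel_add j (by omega), zdel_add j (by omega)] at h2
      omega
    · rw [newEdge_fwd C j m e e₁ e₂ (by omega) hp.2,
        newEdge_last C j m e e₁ e₂ (by omega) (by omega)] at hpq
      exact absurd hpq.symm (F9 (p.val - (m+2)) (by omega))
    · rw [hq, newEdge_zero, newEdge_last C j m e e₁ e₂ (by omega) (by omega)] at hpq
      exact absurd hpq h12
    · rw [newEdge_last C j m e e₁ e₂ (by omega) (by omega),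
        newEdge_back C j m e e₁ e₂ (vne0 q hq.1) hq.2] at hpq
      exact absurd hpq (F6 q.val hq.1 hq.2)
    · rw [newEdge_last C j m e e₁ e₂ (by omega) (by omega),
        newEdge_mid C j m e e₁ e₂ (vne0 q (by omega)) hq] at hpq
      exact absurd hpq.symm F8
    · rw [newEdge_last C j m e e₁ e₂ (by omega) (by omega),
        newEdge_fwd C j m e e₁ e₂ (by omega) hq.2] at hpq
      exact absurd hpq (F9 (q.val - (m+2)) (by omega))
    · apply ZMod.val_injective; omega
  · -- edge_mem
    intro p
    rcases branch p with hp | hp | hp | hp | hp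
    · rw [hp, newEdge_zero]; exact he2
    · rw [newEdge_back C j m e e₁ e₂ (vne0 p hp.1) hp.2]; exact C.edge_mem _
    · rw [newEdge_mid C j m e e₁ e₂ (vne0 p (by omega)) hp]; exact he
    · rw [newEdge_fwd C j m e e₁ e₂ (by omega) hp.2]; exact C.edge_mem _
    · rw [newEdge_last C j m e e₁ e₂ (by omega) (by omega)]; exact he1
  · -- mem_fst
    intro p
    rcases branch p with hp | hp | hp | hp | hp
    · rw [hp, newEdge_zero, newVtx_zero]; exact he2u
    · rw [newVtx_back C u j m (vne0 p hp.1) (by omega),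
        newEdge_back C j m e e₁ e₂ (vne0 p hp.1) hp.2]
      have h2 : j - ((p.val : ℕ) : ZMod t) = (j - ((p.val + 1 : ℕ) : ZMod t)) + 1 := by
        push_cast; ring
      rw [h2]; exact C.mem_snd _
    · rw [newVtx_back C u j m (vne0 p (by omega)) (by omega),
        newEdge_mid C j m e e₁ e₂ (vne0 p (by omega)) hp, hp, him]
      exact hvi
    · rw [newVtx_fwd C u j m (by omega), newEdge_fwd C j m e e₁ e₂ (by omega) hp.2]
      exact C.mem_fst _
    · rw [newVtx_fwd C u j m (by omega), newEdge_last C j m e e₁ e₂ (by omega) (by omega)]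
      have h2 : p.val - (m + 2) = n := by omega
      rw [h2, ← hI1]
      exact he1v
  · -- mem_snd
    intro p
    rcases branch p with hp | hp | hp | hp | hp
    · rw [hp, newEdge_zero, zero_add]
      have hv1 : (1 : ZMod (t+1)).val = 1 := by
        rw [ZMod.val_one_eq_one_mod]; exact Nat.mod_eq_of_lt (by omega)
      rw [newVtx_back C u j m (vne0 1 (by omega)) (by omega), hv1]
      have h2 : j - ((1 : ℕ) : ZMod t) = j - 1 := by norm_num
      rw [h2]; exact he2v
    · have hpv : (p + 1).val = p.val + 1 := val_add_one_of_lt (by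
        have := ZMod.val_lt p; omega)
      rw [newVtx_back C u j m (vne0 _ (by omega)) (by omega),
        newEdge_back C j m e e₁ e₂ (vne0 p hp.1) hp.2, hpv]
      exact C.mem_fst _
    · have hpv : (p + 1).val = p.val + 1 := val_add_one_of_lt (by
        have := ZMod.val_lt p; omega)
      rw [newVtx_fwd C u j m (by omega), newEdge_mid C j m e e₁ e₂ (vne0 p (by omega)) hp, hpv, hp]
      have h2 : m + 1 + 1 - (m + 2) = 0 := by omega
      rw [h2]
      simpa using hvj
    · have hpv : (p + 1).val = p.val + 1 := val_add_one_of_lt (by omega)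
      rw [newVtx_fwd C u j m (by omega), newEdge_fwd C j m e e₁ e₂ (by omega) hp.2, hpv]
      have h2 : j + ((p.val + 1 - (m + 2) : ℕ) : ZMod t) = (j + ((p.val - (m + 2) : ℕ) : ZMod t)) + 1 := by
        have h3 : p.val + 1 - (m + 2) = (p.val - (m + 2)) + 1 := by omega
        rw [h3]; push_cast; ring
      rw [h2]; exact C.mem_snd _
    · have hp0 : p + 1 = 0 := by
        apply (ZMod.val_eq_zero _).mp
        have h2 : (1 : ZMod (t+1)).val = 1 := by
          rw [ZMod.val_one_eq_one_mod]; exact Nat.mod_eq_of_lt (by omega)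
        rw [ZMod.val_add, h2, hp]
        simp
      rw [hp0, newVtx_zero, newEdge_last C j m e e₁ e₂ (by omega) (by omega)]
      exact he1u
  · -- range
    ext x
    simp only [Set.mem_range, Set.mem_insert_iff]
    constructor
    · rintro ⟨p, rfl⟩
      rcases branch p with hp | hp | hp | hp | hp
      · rw [hp, newVtx_zero]; exact Or.inl rfl
      · rw [newVtx_back C u j m (vne0 p hp.1) (by omega)]; exact Or.inr ⟨_, rfl⟩
      · rw [newVtx_back C u j m (vne0 p (by omega)) (by omega)]; exact Or.inr ⟨_, rfl⟩
      · rw [newVtx_fwd C u j m (by omega)]; exact Or.inr ⟨_, rfl⟩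
      · rw [newVtx_fwd C u j m (by omega)]; exact Or.inr ⟨_, rfl⟩
    · intro hx
      rcases hx with hx | ⟨a, rfl⟩
      · exact ⟨0, by rw [newVtx_zero]; exact hx.symm⟩
      · have hd : (a - j).val < t := ZMod.val_lt _
        have hdc : (((a - j).val : ℕ) : ZMod t) = a - j := cast_val_eq _
        set d := (a - j).val with hd_def
        rcases le_or_gt d n with h | h
        · refine ⟨((m + 2 + d : ℕ) : ZMod (t+1)), ?_⟩
          have hval : ((m + 2 + d : ℕ) : ZMod (t+1)).val = m + 2 + d :=
            ZMod.val_cast_of_lt (by omega)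
          rw [newVtx_fwd C u j m (by omega), hval]
          have h2 : m + 2 + d - (m + 2) = d := by omega
          rw [h2]
          have h3 : j + ((d : ℕ) : ZMod t) = a := by rw [hdc]; ring
          rw [h3]
        · refine ⟨((t - d : ℕ) : ZMod (t+1)), ?_⟩
          have hval : ((t - d : ℕ) : ZMod (t+1)).val = t - d :=
            ZMod.val_cast_of_lt (by omega)
          rw [newVtx_back C u j m (vne0 _ (by omega)) (by omega), hval]
          have h3 : j - ((t - d : ℕ) : ZMod t) = a := by
            rw [Nat.cast_sub (le_of_lt hd), ZMod.natCast_self, hdc]; ring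
          rw [h3]

/-- For a maximal Berge cycle `C`, `u ∉ V(C)` and a usable set
`U` for `u`: any two adjacent vertices `v_i, v_j` of `U` satisfy
`E(v_i, v_j) ⊆ {e_i, e_j}`. -/
theorem stmt6 {V : Type*} [Fintype V] (H : Finset (Finset V)) (h3 : IsThreeGraph H)
    {t : ℕ} (C : BergeCycle H t)
    (hmax : ¬ ∃ (t' : ℕ) (C' : BergeCycle H t'),
      Set.range C.vtx ⊂ Set.range C'.vtx)
    (u : V) (hu : u ∉ Set.range C.vtx)
    (U : Set (ZMod t)) (hU : Usable C u U)
    (i j : ZMod t) (hi : i ∈ U) (hj : j ∈ U) (hij : i ≠ j)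
    (hadj : HAdj H (C.vtx i) (C.vtx j)) :
    ∀ e ∈ H, C.vtx i ∈ e → C.vtx j ∈ e → e = C.edge i ∨ e = C.edge j := by
  classical
  intro e he hvi hvj
  by_contra hcon
  push_neg at hcon
  obtain ⟨hEi, hEj⟩ := hcon
  have ht0 : t ≠ 0 := by
    intro h
    subst h
    have hfin : Finite (ZMod 0) := Finite.of_injective C.vtx C.vtx_inj
    exact @not_finite ℤ _ hfin
  haveI : NeZero t := ⟨ht0⟩
  obtain ⟨hcond1, hcond2, hcond3⟩ := hU
  obtain ⟨hji1, hji2⟩ := hcond2 i hi j hj hij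
  obtain ⟨e₁, he1, e₂, he2, h12, hne1, hu1, hv1, hne2, hu2, hv2⟩ := hcond3 i hi j hj hij
  have ht4 : 4 ≤ t := by
    by_contra h
    push_neg at h
    set x := j - i with hx
    have hx0 : x ≠ 0 := fun h0 => hij (by linear_combination -h0)
    have hx1 : x ≠ 1 := fun h1 => hji1 (by linear_combination h1)
    have hxm : x ≠ -1 := fun h1 => hji2 (by linear_combination h1)
    have hv := ZMod.val_lt x
    have h0 : x.val ≠ 0 := fun hh => hx0 ((ZMod.val_eq_zero x).mp hh)
    have h1 : x.val ≠ 1 := by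
      intro hh
      apply hx1
      have h2 := cast_val_eq x
      rw [hh] at h2
      simpa using h2.symm
    have h2 : x.val ≠ t - 1 := by
      intro hh
      apply hxm
      have h3 := cast_val_eq x
      rw [hh, Nat.cast_sub (by omega : 1 ≤ t), ZMod.natCast_self] at h3
      rw [← h3]; ring
    omega
  obtain ⟨C', hC'⟩ := extend_cycle h3 C u hu i j ht4 hij hji1 hji2 he hvi hvj
    he1 hu1 hv1 hne1 he2 hu2 hv2 hne2 h12 hEi hEj
  exact hmax ⟨t + 1, C', by rw [hC']; exact Set.ssubset_insert hu⟩
end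

section
/- Let H be a [3]-graph and C = v_1, e_1, ..., v_ℓ, e_ℓ, v_1 a Berge cycle in H. For any set X ⊆ V(C) and any edge e of H, the number of pairs {v_i, v_j} ⊆ X with e ∈ R(v_i, v_j) is at most |X| − 1. -/
namespace ZMod

lemma val_add_one_eq_zero_or_le {t : ℕ} [NeZero t] (x : ZMod t) :
    (x + 1).val = 0 ∨ x.val ≤ (x + 1).val := by
  have hx := x.val_lt
  have h1 : (1 : ZMod t).val ≤ 1 := (val_one_eq_one_mod t).trans_le (Nat.mod_le _ _)
  rcases lt_or_ge (x.val + (1 : ZMod t).val) t with h | h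
  · rw [val_add_of_lt h]
    omega
  · have := val_add_val_of_le h
    omega

lemma val_le_val_neg_one {t : ℕ} [NeZero t] (y : ZMod t) : y.val ≤ (-1 : ZMod t).val := by
  obtain ⟨n, rfl⟩ := Nat.exists_eq_succ_of_ne_zero (NeZero.ne t)
  rw [val_neg_one]
  exact Nat.le_of_lt_succ y.val_lt

end ZMod

lemma not_cwBtw_add_one_self {t : ℕ} [NeZero t] (i m : ZMod t) : ¬ CwBtw i (m + 1) m := by
  rintro ⟨hpos, hlt⟩
  rw [show m + 1 - i = m - i + 1 by ring] at hpos hlt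
  rcases ZMod.val_add_one_eq_zero_or_le (m - i) with h | h <;> omega

lemma not_cwBtw_self_sub_one {t : ℕ} [NeZero t] (m j : ZMod t) : ¬ CwBtw m (m - 1) j := by
  rintro ⟨-, hlt⟩
  rw [show m - 1 - m = -1 by ring] at hlt
  exact hlt.not_ge (ZMod.val_le_val_neg_one _)

lemma BergeCycle.neZero {V : Type*} [Finite V] {H : Finset (Finset V)} {t : ℕ}
    (C : BergeCycle H t) : NeZero t := by
  refine ⟨fun ht => ?_⟩
  subst ht
  have : Finite ℤ := Finite.of_injective _ C.vtx_inj
  exact not_finite ℤ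

section Apex

variable {V : Type*} [DecidableEq V] {H : Finset (Finset V)} {t : ℕ} (C : BergeCycle H t)

def IsApex (e : Finset V) (a : ZMod t) : Prop :=
  ∃ m, a ≠ m ∧ e = C.edge m ∧ e = {C.vtx a, C.vtx m, C.vtx (m + 1)}

variable {C}

lemma IsApex.unique {e : Finset V} {a b : ZMod t} (ha : IsApex C e a) (hb : IsApex C e b) :
    a = b := by
  obtain ⟨m, ham, rfl, hea⟩ := ha
  obtain ⟨m', hbm', hm', heb⟩ := hb
  obtain rfl : m = m' := C.edge_inj hm'
  have ha_mem : C.vtx a ∈ ({C.vtx b, C.vtx m, C.vtx (m + 1)} : Finset V) := by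
    rw [← heb, hea]; simp
  have hb_mem : C.vtx b ∈ ({C.vtx a, C.vtx m, C.vtx (m + 1)} : Finset V) := by
    rw [← hea, heb]; simp
  simp only [Finset.mem_insert, Finset.mem_singleton, C.vtx_inj.eq_iff] at ha_mem hb_mem
  grind

variable [NeZero t] {e : Finset V} {a b k : ZMod t}

lemma isApex_of_edge_add_one (hcw : CwBtw a k b) (he : e = C.edge (k + 1))
    (he' : e = {C.vtx a, C.vtx (k + 1), C.vtx (k + 2)}) : IsApex C e a := by
  refine ⟨k + 1, ?_, he, by rwa [show k + 1 + 1 = k + 2 by ring]⟩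
  rintro rfl
  exact not_cwBtw_self_sub_one (k + 1) b (by rwa [add_sub_cancel_right])

lemma isApex_of_edge_sub_one (hcw : CwBtw b k a) (he : e = C.edge (k - 1))
    (he' : e = {C.vtx a, C.vtx k, C.vtx (k - 1)}) : IsApex C e a := by
  refine ⟨k - 1, ?_, he, ?_⟩
  · rintro rfl
    exact not_cwBtw_add_one_self b (k - 1) (by rwa [sub_add_cancel])
  · rw [he', sub_add_cancel, Finset.pair_comm]

lemma IsBridge.exists_isApex {i j : ZMod t} (h : IsBridge C i j k e) :
    ∃ a, (a = i ∨ a = j) ∧ IsApex C e a := by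
  rcases h with ⟨hcw, ⟨he, he'⟩ | ⟨he, he'⟩⟩ | ⟨hcw, ⟨he, he'⟩ | ⟨he, he'⟩⟩
  · exact ⟨i, .inl rfl, isApex_of_edge_add_one hcw he he'⟩
  · exact ⟨j, .inr rfl, isApex_of_edge_sub_one hcw he he'⟩
  · exact ⟨i, .inl rfl, isApex_of_edge_sub_one hcw he he'⟩
  · exact ⟨j, .inr rfl, isApex_of_edge_add_one hcw he he'⟩

lemma exists_isApex_of_mem_rBridges {i j : ZMod t} (h : e ∈ RBridges C i j) :
    ∃ a, (a = i ∨ a = j) ∧ IsApex C e a :=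
  let ⟨_, _, _, hbr⟩ := h
  hbr.exists_isApex

lemma IsApex.eq_or_eq_of_mem_rBridges {i j : ZMod t} (ha : IsApex C e a)
    (h : e ∈ RBridges C i j) : a = i ∨ a = j := by
  obtain ⟨b, hb, hb'⟩ := exists_isApex_of_mem_rBridges h
  rwa [ha.unique hb']

end Apex

lemma Set.ncard_le_ncard_sub_one_of_forall_eq_pair {α : Type*} [DecidableEq α] {X : Set α}
    {S : Set (Finset α)} (hX : X.Finite)
    (hS : S.Nonempty → ∃ a ∈ X, ∀ p ∈ S, ∃ b ∈ X \ {a}, p = {a, b}) : S.ncard ≤ X.ncard - 1 := by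
  obtain rfl | hne := S.eq_empty_or_nonempty
  · simp
  obtain ⟨a, ha, hS⟩ := hS hne
  calc S.ncard ≤ ((fun b => ({a, b} : Finset α)) '' (X \ {a})).ncard :=
        Set.ncard_le_ncard (fun p hp => (hS p hp).imp fun _ ⟨hb, hp⟩ => ⟨hb, hp.symm⟩)
          (hX.sdiff.image _)
    _ ≤ (X \ {a}).ncard := Set.ncard_image_le hX.sdiff
    _ = X.ncard - 1 := Set.ncard_sdiff_singleton_of_mem ha

theorem stmt8_general {V : Type*} [Fintype V] [DecidableEq V] (H : Finset (Finset V))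
    {t : ℕ} (C : BergeCycle H t)
    (X : Set (ZMod t)) (e : Finset V) :
    {p : Finset (ZMod t) | ∃ i ∈ X, ∃ j ∈ X, i ≠ j ∧ p = {i, j} ∧
      e ∈ RBridges C i j}.ncard ≤ X.ncard - 1 := by
  have := C.neZero
  refine Set.ncard_le_ncard_sub_one_of_forall_eq_pair X.toFinite
    fun ⟨_, i, hi, j, hj, _, _, hR⟩ => ?_
  obtain ⟨a, hai, ha⟩ := exists_isApex_of_mem_rBridges hR
  refine ⟨a, by rcases hai with rfl | rfl <;> assumption, ?_⟩
  rintro _ ⟨i', hi', j', hj', hij', rfl, hR'⟩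
  rcases ha.eq_or_eq_of_mem_rBridges hR' with rfl | rfl
  · exact ⟨j', ⟨hj', hij'.symm⟩, rfl⟩
  · exact ⟨i', ⟨hi', hij'⟩, Finset.pair_comm _ _⟩

/-- Given a Berge cycle `C`, a set `X` of (indices of) vertices
of `C` and an edge `e` of `H`, the number of pairs `{v_i, v_j} ⊆ X` with
`e ∈ R(v_i, v_j)` is at most `|X| - 1`. -/
theorem stmt8 {V : Type*} [Fintype V] [DecidableEq V] (H : Finset (Finset V))
    (h3 : IsThreeGraph H) {t : ℕ} (C : BergeCycle H t)
    (X : Set (ZMod t)) (e : Finset V) (he : e ∈ H) :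
    {p : Finset (ZMod t) | ∃ i ∈ X, ∃ j ∈ X, i ≠ j ∧ p = {i, j} ∧
      e ∈ RBridges C i j}.ncard ≤ X.ncard - 1 :=
  stmt8_general H C X e
end

section
/- Suppose H is a [3]-graph on n ≥ 69 vertices such that every pair of non-adjacent vertices u, v satisfies d_{∂H}(u) + d_{∂H}(v) ≥ n + 65, and H contains no Hamiltonian Berge cycle. Let C be a maximal Berge cycle in H with |V(C)| ∈ {n−1, n−2, n−3}, let u ∈ V(H) − V(C), and let U_u ⊆ V(C) be a usable set for u with |U_u| ≥ d_C(u)/6. Then |U_u ∩ B'(C)| ≤ 3, where B'(C) = {v ∈ V(H) : d_C(v) ≥ 3n/4 + 13}. -/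
namespace Stmt12

open Finset

lemma four_le_card {V : Type*} [DecidableEq V] {s : Finset V} {a b c d : V}
    (ha : a ∈ s) (hb : b ∈ s) (hc : c ∈ s) (hd : d ∈ s)
    (h1 : a ≠ b) (h2 : a ≠ c) (h3 : a ≠ d) (h4 : b ≠ c) (h5 : b ≠ d) (h6 : c ≠ d) :
    4 ≤ s.card := by
  have hsub : ({a, b, c, d} : Finset V) ⊆ s := by
    intro x hx
    simp only [mem_insert, mem_singleton] at hx
    rcases hx with rfl | rfl | rfl | rfl <;> assumption
  have hcard : ({a, b, c, d} : Finset V).card = 4 := by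
    rw [card_insert_of_notMem (by simp [h1, h2, h3]),
        card_insert_of_notMem (by simp [h4, h5]),
        card_insert_of_notMem (by simp [h6]), card_singleton]
  calc 4 = ({a, b, c, d} : Finset V).card := hcard.symm
    _ ≤ s.card := card_le_card hsub

/-- vertex sequence of the extended cycle, as a function of the position `p ∈ [0, t]`. -/
def exVtx {V : Type*} {H : Finset (Finset V)} {t : ℕ} (C : BergeCycle H t)
    (u : V) (a : ZMod t) (D K : ℕ) : ℕ → V := fun p =>
  if p ≤ K then C.vtx (a + (p : ZMod t))
  else if p ≤ K + (t - D) then C.vtx (a + ((D + (p - K - 1) : ℕ) : ZMod t))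
  else if p = K + (t - D) + 1 then u
  else C.vtx (a + ((D - 1 - (p - (K + (t - D) + 2)) : ℕ) : ZMod t))

/-- edge sequence of the extended cycle. -/
def exEdg {V : Type*} {H : Finset (Finset V)} {t : ℕ} (C : BergeCycle H t)
    (e e' f g : Finset V) (a : ZMod t) (D K : ℕ) : ℕ → Finset V := fun p =>
  if p < K then C.edge (a + (p : ZMod t))
  else if p = K then g
  else if p < K + (t - D) then C.edge (a + ((D + (p - K - 1) : ℕ) : ZMod t))
  else if p = K + (t - D) then e
  else if p = K + (t - D) + 1 then e'
  else if p ≤ t - 1 then C.edge (a + ((D - 2 - (p - (K + (t - D) + 2)) : ℕ) : ZMod t))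
  else f

set_option maxHeartbeats 3200000 in
theorem extend {V : Type*} [DecidableEq V] {H : Finset (Finset V)} {t : ℕ}
    (C : BergeCycle H t) (h3 : IsThreeGraph H) {u : V} (hu : u ∉ Set.range C.vtx)
    (ht66 : 66 ≤ t) (a : ZMod t) (D K : ℕ) (hD2 : 2 ≤ D) (hDt : D ≤ t - 2)
    (hK1 : 1 ≤ K) (hKD : K ≤ D - 3)
    {e e' f g : Finset V} (heH : e ∈ H) (he'H : e' ∈ H) (hfH : f ∈ H) (hgH : g ∈ H)
    (hee' : e ≠ e')
    (heu : u ∈ e) (hea : C.vtx (a - 1) ∈ e) (hene : e ≠ C.edge (a - 2))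
    (he'u : u ∈ e') (he'b : C.vtx (a + (D : ZMod t) - 1) ∈ e')
    (he'ne : e' ≠ C.edge (a + (D : ZMod t) - 2))
    (hfa : C.vtx a ∈ f) (hfk : C.vtx (a + (K : ZMod t) + 1) ∈ f)
    (hfne : f ≠ C.edge (a + (K : ZMod t) + 1))
    (hgb : C.vtx (a + (D : ZMod t)) ∈ g) (hgk : C.vtx (a + (K : ZMod t)) ∈ g)
    (hgne : g ≠ C.edge (a + (K : ZMod t) - 1))
    (hxa : C.vtx (a + (K : ZMod t) + 1) ∉ C.edge a)
    (hxb : C.vtx (a + (K : ZMod t)) ∉ C.edge (a + (D : ZMod t))) :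
    ∃ (C' : BergeCycle H (t + 1)), Set.range C.vtx ⊂ Set.range C'.vtx := by
  haveI : NeZero t := ⟨by omega⟩
  haveI : NeZero (t + 1) := ⟨by omega⟩
  have hD4 : 4 ≤ D := by omega
  have hDt' : D + 2 ≤ t := by omega
  have hKD' : K + 3 ≤ D := by omega
  -- basic cast tools
  have hinj : ∀ {s s' : ℕ}, s < t → s' < t → (s : ZMod t) = (s' : ZMod t) → s = s' := by
    intro s s' hs hs' h
    have h1 := ZMod.val_cast_of_lt hs
    have h2 := ZMod.val_cast_of_lt hs'
    rw [h] at h1; omega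
  have hvinj : ∀ {s s' : ℕ}, s < t → s' < t →
      C.vtx (a + (s : ZMod t)) = C.vtx (a + (s' : ZMod t)) → s = s' := by
    intro s s' hs hs' h
    exact hinj hs hs' (by have := C.vtx_inj h; exact add_left_cancel this)
  have heinj : ∀ {s s' : ℕ}, s < t → s' < t →
      C.edge (a + (s : ZMod t)) = C.edge (a + (s' : ZMod t)) → s = s' := by
    intro s s' hs hs' h
    exact hinj hs hs' (by have := C.edge_inj h; exact add_left_cancel this)
  have hu_ne : ∀ x : ZMod t, u ≠ C.vtx x := fun x h => hu ⟨x, h.symm⟩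
  have hshift : ∀ s : ℕ, (a + (s : ZMod t)) + 1 = a + ((s + 1 : ℕ) : ZMod t) := by
    intro s; push_cast; ring
  have hm1 : a + ((t - 1 : ℕ) : ZMod t) = a - 1 := by
    have : ((t - 1 : ℕ) : ZMod t) = -1 := by
      rw [Nat.cast_sub (by omega : 1 ≤ t)]; simp
    rw [this]; ring
  have hm2 : a + ((t - 2 : ℕ) : ZMod t) = a - 2 := by
    have : ((t - 2 : ℕ) : ZMod t) = -2 := by
      rw [Nat.cast_sub (by omega : 2 ≤ t)]; simp
    rw [this]; ring
  have hDm1 : a + ((D - 1 : ℕ) : ZMod t) = a + (D : ZMod t) - 1 := by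
    rw [Nat.cast_sub (by omega : 1 ≤ D)]; ring
  have hDm2 : a + ((D - 2 : ℕ) : ZMod t) = a + (D : ZMod t) - 2 := by
    rw [Nat.cast_sub (by omega : 2 ≤ D)]; ring
  have hKm1 : a + ((K - 1 : ℕ) : ZMod t) = a + (K : ZMod t) - 1 := by
    rw [Nat.cast_sub (by omega : 1 ≤ K)]; ring
  have hKp1 : a + ((K + 1 : ℕ) : ZMod t) = a + (K : ZMod t) + 1 := by push_cast; ring
  have ha0 : a + ((0 : ℕ) : ZMod t) = a := by simp
  -- converted memberships
  have hea' : C.vtx (a + ((t - 1 : ℕ) : ZMod t)) ∈ e := by rw [hm1]; exact hea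
  have he'b' : C.vtx (a + ((D - 1 : ℕ) : ZMod t)) ∈ e' := by rw [hDm1]; exact he'b
  have hfk' : C.vtx (a + ((K + 1 : ℕ) : ZMod t)) ∈ f := by rw [hKp1]; exact hfk
  have hfa' : C.vtx (a + ((0 : ℕ) : ZMod t)) ∈ f := by rw [ha0]; exact hfa
  -- "third vertex" tool for cycle edges
  have third : ∀ (s : ℕ), s < t → ∀ {x y : V}, x ∈ C.edge (a + (s : ZMod t)) →
      y ∈ C.edge (a + (s : ZMod t)) → x ≠ y →
      x ≠ C.vtx (a + (s : ZMod t)) → x ≠ C.vtx (a + ((s + 1 : ℕ) : ZMod t)) →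
      y ≠ C.vtx (a + (s : ZMod t)) → y ≠ C.vtx (a + ((s + 1 : ℕ) : ZMod t)) → False := by
    intro s hs x y hx hy hxy hx1 hx2 hy1 hy2
    have hne : C.vtx (a + (s : ZMod t)) ≠ C.vtx (a + ((s + 1 : ℕ) : ZMod t)) := by
      intro h
      rcases Nat.lt_or_ge (s + 1) t with h' | h'
      · have := hvinj hs h' h; omega
      · have hst : s = t - 1 := by omega
        subst hst
        have : ((t - 1 + 1 : ℕ) : ZMod t) = ((0 : ℕ) : ZMod t) := by
          have : t - 1 + 1 = t := by omega
          rw [this]; simp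
        rw [this] at h
        have := hvinj hs (by omega) h; omega
    have hc : (C.edge (a + (s : ZMod t))).card ≤ 3 := by
      rcases h3 _ (C.edge_mem (a + (s : ZMod t))) with h | h <;> omega
    have h4 := four_le_card (C.mem_fst (a + (s : ZMod t)))
      (by rw [← hshift]; exact C.mem_snd (a + (s : ZMod t)) : C.vtx (a + ((s+1:ℕ) : ZMod t)) ∈ _)
      hx hy hne (Ne.symm hx1) (Ne.symm hy1) (Ne.symm hx2) (Ne.symm hy2) hxy
    omega

  -- the special edges differ from all used cycle edges
  have he_ne : ∀ s : ℕ, (s < K ∨ (D ≤ s ∧ s ≤ t - 2) ∨ (K + 1 ≤ s ∧ s ≤ D - 2)) →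
      e ≠ C.edge (a + (s : ZMod t)) := by
    intro s hs heq
    have hst : s < t := by omega
    have hue : u ∈ C.edge (a + (s : ZMod t)) := heq ▸ heu
    have hye : C.vtx (a + ((t - 1 : ℕ) : ZMod t)) ∈ C.edge (a + (s : ZMod t)) := heq ▸ hea'
    by_cases h1 : C.vtx (a + ((t - 1 : ℕ) : ZMod t)) = C.vtx (a + (s : ZMod t))
    · have := hvinj (by omega) hst h1; omega
    by_cases h2 : C.vtx (a + ((t - 1 : ℕ) : ZMod t)) = C.vtx (a + ((s + 1 : ℕ) : ZMod t))
    · rcases Nat.lt_or_ge (s + 1) t with h' | h'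
      · have hs2 : s = t - 2 := by have := hvinj (by omega) h' h2; omega
        subst hs2
        rw [hm2] at heq
        exact hene heq
      · have hs1 : s = t - 1 := by omega
        omega
    exact third s hst hue hye (hu_ne _) (hu_ne _) (hu_ne _) h1 h2
  have he'_ne : ∀ s : ℕ, (s < K ∨ (D ≤ s ∧ s ≤ t - 2) ∨ (K + 1 ≤ s ∧ s ≤ D - 2)) →
      e' ≠ C.edge (a + (s : ZMod t)) := by
    intro s hs heq
    have hst : s < t := by omega
    have hue : u ∈ C.edge (a + (s : ZMod t)) := heq ▸ he'u
    have hye : C.vtx (a + ((D - 1 : ℕ) : ZMod t)) ∈ C.edge (a + (s : ZMod t)) := heq ▸ he'b'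
    by_cases h1 : C.vtx (a + ((D - 1 : ℕ) : ZMod t)) = C.vtx (a + (s : ZMod t))
    · have := hvinj (by omega) hst h1; omega
    by_cases h2 : C.vtx (a + ((D - 1 : ℕ) : ZMod t)) = C.vtx (a + ((s + 1 : ℕ) : ZMod t))
    · have hs2 : s = D - 2 := by have := hvinj (by omega) (by omega) h2; omega
      subst hs2
      rw [hDm2] at heq
      exact he'ne heq
    exact third s hst hue hye (hu_ne _) (hu_ne _) (hu_ne _) h1 h2
  have hf_ne : ∀ s : ℕ, (s < K ∨ (D ≤ s ∧ s ≤ t - 2) ∨ (K + 1 ≤ s ∧ s ≤ D - 2)) →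
      f ≠ C.edge (a + (s : ZMod t)) := by
    intro s hs heq
    have hst : s < t := by omega
    have hxe : C.vtx (a + ((0 : ℕ) : ZMod t)) ∈ C.edge (a + (s : ZMod t)) := heq ▸ hfa'
    have hye : C.vtx (a + ((K + 1 : ℕ) : ZMod t)) ∈ C.edge (a + (s : ZMod t)) := heq ▸ hfk'
    by_cases h1 : C.vtx (a + ((0 : ℕ) : ZMod t)) = C.vtx (a + (s : ZMod t))
    · have hs0 : s = 0 := by have := hvinj (by omega) hst h1; omega
      subst hs0
      rw [ha0] at heq
      exact hxa (heq ▸ hfk)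
    by_cases h2 : C.vtx (a + ((0 : ℕ) : ZMod t)) = C.vtx (a + ((s + 1 : ℕ) : ZMod t))
    · rcases Nat.lt_or_ge (s + 1) t with h' | h'
      · have := hvinj (by omega) h' h2; omega
      · have hs1 : s = t - 1 := by omega
        omega
    by_cases h3' : C.vtx (a + ((K + 1 : ℕ) : ZMod t)) = C.vtx (a + (s : ZMod t))
    · have hsK : s = K + 1 := by have := hvinj (by omega) hst h3'; omega
      subst hsK
      rw [hKp1] at heq
      exact hfne heq
    by_cases h4 : C.vtx (a + ((K + 1 : ℕ) : ZMod t)) = C.vtx (a + ((s + 1 : ℕ) : ZMod t))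
    · rcases Nat.lt_or_ge (s + 1) t with h' | h'
      · have := hvinj (by omega) h' h4; omega
      · omega
    have hne : C.vtx (a + ((0 : ℕ) : ZMod t)) ≠ C.vtx (a + ((K + 1 : ℕ) : ZMod t)) := by
      intro h; have := hvinj (by omega) (by omega) h; omega
    exact third s hst hxe hye hne h1 h2 h3' h4
  have hg_ne : ∀ s : ℕ, (s < K ∨ (D ≤ s ∧ s ≤ t - 2) ∨ (K + 1 ≤ s ∧ s ≤ D - 2)) →
      g ≠ C.edge (a + (s : ZMod t)) := by
    intro s hs heq
    have hst : s < t := by omega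
    have hxe : C.vtx (a + ((D : ℕ) : ZMod t)) ∈ C.edge (a + (s : ZMod t)) := heq ▸ hgb
    have hye : C.vtx (a + ((K : ℕ) : ZMod t)) ∈ C.edge (a + (s : ZMod t)) := heq ▸ hgk
    by_cases h1 : C.vtx (a + ((D : ℕ) : ZMod t)) = C.vtx (a + (s : ZMod t))
    · have hsD : s = D := by have := hvinj (by omega) hst h1; omega
      subst hsD
      exact hxb (heq ▸ hgk)
    by_cases h2 : C.vtx (a + ((D : ℕ) : ZMod t)) = C.vtx (a + ((s + 1 : ℕ) : ZMod t))
    · rcases Nat.lt_or_ge (s + 1) t with h' | h'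
      · have := hvinj (by omega) h' h2; omega
      · omega
    by_cases h3' : C.vtx (a + ((K : ℕ) : ZMod t)) = C.vtx (a + (s : ZMod t))
    · have := hvinj (by omega) hst h3'; omega
    by_cases h4 : C.vtx (a + ((K : ℕ) : ZMod t)) = C.vtx (a + ((s + 1 : ℕ) : ZMod t))
    · rcases Nat.lt_or_ge (s + 1) t with h' | h'
      · have hsK : s = K - 1 := by have := hvinj (by omega) h' h4; omega
        subst hsK
        rw [hKm1] at heq
        exact hgne heq
      · omega
    have hne : C.vtx (a + ((D : ℕ) : ZMod t)) ≠ C.vtx (a + ((K : ℕ) : ZMod t)) := by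
      intro h; have := hvinj (by omega) (by omega) h; omega
    exact third s hst hxe hye hne h1 h2 h3' h4

  -- pairwise distinctness of the special edges
  have hef : e ≠ f := by
    intro heq
    have hc : e.card ≤ 3 := by rcases h3 _ heH with h | h <;> omega
    exact absurd (four_le_card heu hea' (heq ▸ hfa') (heq ▸ hfk')
      (hu_ne _) (hu_ne _) (hu_ne _)
      (fun h => by have := hvinj (by omega) (by omega) h; omega)
      (fun h => by have := hvinj (by omega) (by omega) h; omega)
      (fun h => by have := hvinj (by omega) (by omega) h; omega)) (by omega)
  have heg : e ≠ g := by
    intro heq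
    have hc : e.card ≤ 3 := by rcases h3 _ heH with h | h <;> omega
    exact absurd (four_le_card heu hea' (heq ▸ hgb) (heq ▸ hgk)
      (hu_ne _) (hu_ne _) (hu_ne _)
      (fun h => by have := hvinj (by omega) (by omega) h; omega)
      (fun h => by have := hvinj (by omega) (by omega) h; omega)
      (fun h => by have := hvinj (by omega) (by omega) h; omega)) (by omega)
  have he'f : e' ≠ f := by
    intro heq
    have hc : e'.card ≤ 3 := by rcases h3 _ he'H with h | h <;> omega
    exact absurd (four_le_card he'u he'b' (heq ▸ hfa') (heq ▸ hfk')
      (hu_ne _) (hu_ne _) (hu_ne _)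
      (fun h => by have := hvinj (by omega) (by omega) h; omega)
      (fun h => by have := hvinj (by omega) (by omega) h; omega)
      (fun h => by have := hvinj (by omega) (by omega) h; omega)) (by omega)
  have he'g : e' ≠ g := by
    intro heq
    have hc : e'.card ≤ 3 := by rcases h3 _ he'H with h | h <;> omega
    exact absurd (four_le_card he'u he'b' (heq ▸ hgb) (heq ▸ hgk)
      (hu_ne _) (hu_ne _) (hu_ne _)
      (fun h => by have := hvinj (by omega) (by omega) h; omega)
      (fun h => by have := hvinj (by omega) (by omega) h; omega)
      (fun h => by have := hvinj (by omega) (by omega) h; omega)) (by omega)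
  have hfg : f ≠ g := by
    intro heq
    have hc : f.card ≤ 3 := by rcases h3 _ hfH with h | h <;> omega
    exact absurd (four_le_card hfa' hfk' (heq ▸ hgb) (heq ▸ hgk)
      (fun h => by have := hvinj (by omega) (by omega) h; omega)
      (fun h => by have := hvinj (by omega) (by omega) h; omega)
      (fun h => by have := hvinj (by omega) (by omega) h; omega)
      (fun h => by have := hvinj (by omega) (by omega) h; omega)
      (fun h => by have := hvinj (by omega) (by omega) h; omega)
      (fun h => by have := hvinj (by omega) (by omega) h; omega)) (by omega)
  -- injectivity of the position functions on [0, t]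
  have hVinj : ∀ p q : ℕ, p ≤ t → q ≤ t →
      exVtx C u a D K p = exVtx C u a D K q → p = q := by
    intro p q hp hq heq
    unfold exVtx at heq
    split_ifs at heq with h1 h2 h3' h4 h5 h6 h7 h8 h9 h10 h11 h12 h13 h14 h15 h16 <;>
      first
        | omega
        | (have := hvinj (by omega) (by omega) heq; omega)
        | (exact absurd heq.symm (hu_ne _))
        | (exact absurd heq (hu_ne _))
  have hEinj : ∀ p q : ℕ, p ≤ t → q ≤ t →
      exEdg C e e' f g a D K p = exEdg C e e' f g a D K q → p = q := by
    intro p q hp hq heq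
    unfold exEdg at heq
    split_ifs at heq <;>
      first
        | omega
        | (have := heinj (by omega) (by omega) heq; omega)
        | (exact absurd heq (he_ne _ (by omega)))
        | (exact absurd heq.symm (he_ne _ (by omega)))
        | (exact absurd heq (he'_ne _ (by omega)))
        | (exact absurd heq.symm (he'_ne _ (by omega)))
        | (exact absurd heq (hf_ne _ (by omega)))
        | (exact absurd heq.symm (hf_ne _ (by omega)))
        | (exact absurd heq (hg_ne _ (by omega)))
        | (exact absurd heq.symm (hg_ne _ (by omega)))
        | (exact absurd heq hee')
        | (exact absurd heq.symm hee')
        | (exact absurd heq hef)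
        | (exact absurd heq.symm hef)
        | (exact absurd heq heg)
        | (exact absurd heq.symm heg)
        | (exact absurd heq he'f)
        | (exact absurd heq.symm he'f)
        | (exact absurd heq he'g)
        | (exact absurd heq.symm he'g)
        | (exact absurd heq hfg)
        | (exact absurd heq.symm hfg)

  have hEH : ∀ p : ℕ, p ≤ t → exEdg C e e' f g a D K p ∈ H := by
    intro p hp
    unfold exEdg
    split_ifs <;> first
      | exact C.edge_mem _
      | exact heH
      | exact he'H
      | exact hfH
      | exact hgH
  have hMem1 : ∀ p : ℕ, p ≤ t → exVtx C u a D K p ∈ exEdg C e e' f g a D K p := by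
    intro p hp
    unfold exVtx exEdg
    split_ifs <;> first
      | omega
      | exact C.mem_fst _
      | exact heu
      | exact he'u
      | (have hpK : p = K := by omega
         rw [hpK]; exact hgk)
      | (have hpe : D + (p - K - 1) = t - 1 := by omega
         rw [hpe]; exact hea')
      | (have hpe : D - 1 - (p - (K + (t - D) + 2)) = (D - 2 - (p - (K + (t - D) + 2))) + 1 := by
            omega
         rw [hpe, ← hshift]; exact C.mem_snd _)
      | (have hpe : D - 1 - (p - (K + (t - D) + 2)) = K + 1 := by omega
         rw [hpe]; exact hfk')
  have hMem2 : ∀ p : ℕ, p ≤ t →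
      exVtx C u a D K ((p + 1) % (t + 1)) ∈ exEdg C e e' f g a D K p := by
    intro p hp
    rcases Nat.lt_or_ge p t with hpt | hpt
    · have hmod : (p + 1) % (t + 1) = p + 1 := Nat.mod_eq_of_lt (by omega)
      rw [hmod]
      unfold exVtx exEdg
      split_ifs <;> first
        | omega
        | exact heu
        | (rw [← hshift]; exact C.mem_snd _)
        | (have hpe : D + (p + 1 - K - 1) = D := by omega
           rw [hpe]; exact hgb)
        | (have hpe : D + (p + 1 - K - 1) = D + (p - K - 1) + 1 := by omega
           rw [hpe, ← hshift]; exact C.mem_snd _)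
        | (have hpe : D - 1 - (p + 1 - (K + (t - D) + 2)) = D - 1 := by omega
           rw [hpe]; exact he'b')
        | (have hpe : D - 1 - (p + 1 - (K + (t - D) + 2)) = D - 2 - (p - (K + (t - D) + 2)) := by
              omega
           rw [hpe]; exact C.mem_fst _)
    · have hpt' : p = t := by omega
      rw [hpt']
      have hmod : (t + 1) % (t + 1) = 0 := Nat.mod_self _
      rw [hmod]
      unfold exVtx exEdg
      split_ifs <;> first
        | omega
        | exact hfa'
  -- assemble the Berge cycle of length t+1
  haveI : Fact (1 < t + 1) := ⟨by omega⟩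
  have hvalle : ∀ i : ZMod (t + 1), i.val ≤ t := by
    intro i; have := ZMod.val_lt i; omega
  have hvcast : ∀ i j : ZMod (t + 1), i.val = j.val → i = j := by
    intro i j h
    have h1 := ZMod.natCast_rightInverse (n := t + 1) i
    have h2 := ZMod.natCast_rightInverse (n := t + 1) j
    rw [← h1, ← h2, h]
  have hsucc : ∀ i : ZMod (t + 1), (i + 1).val = (i.val + 1) % (t + 1) := by
    intro i; rw [ZMod.val_add, ZMod.val_one]
  refine ⟨⟨fun i => exVtx C u a D K i.val, fun i => exEdg C e e' f g a D K i.val,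
      fun i j h => hvcast i j (hVinj _ _ (hvalle i) (hvalle j) h),
      fun i j h => hvcast i j (hEinj _ _ (hvalle i) (hvalle j) h),
      fun i => hEH _ (hvalle i),
      fun i => hMem1 _ (hvalle i),
      fun i => by
        show exVtx C u a D K ((i + 1).val) ∈ _
        rw [hsucc i]; exact hMem2 _ (hvalle i)⟩, ?_⟩
  rw [Set.ssubset_def]
  constructor
  · rintro x ⟨w, rfl⟩
    set s₀ : ℕ := (w - a).val with hs₀def
    have hs₀ : s₀ < t := ZMod.val_lt _
    have hw : a + (s₀ : ZMod t) = w := by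
      rw [hs₀def, ZMod.natCast_rightInverse (w - a)]; ring
    rcases Nat.lt_or_ge K s₀ with hc1 | hc1
    · rcases Nat.lt_or_ge (D - 1) s₀ with hc2 | hc2
      · -- middle segment: p = K + 1 + (s₀ - D)
        refine ⟨((K + 1 + (s₀ - D) : ℕ) : ZMod (t + 1)), ?_⟩
        show exVtx C u a D K (((K + 1 + (s₀ - D) : ℕ) : ZMod (t + 1)).val) = C.vtx w
        rw [ZMod.val_cast_of_lt (by omega : K + 1 + (s₀ - D) < t + 1)]
        unfold exVtx
        rw [if_neg (by omega), if_pos (by omega)]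
        have hpe : D + (K + 1 + (s₀ - D) - K - 1) = s₀ := by omega
        rw [hpe, hw]
      · -- descending segment: p = K + (t - D) + 2 + (D - 1 - s₀)
        refine ⟨((K + (t - D) + 2 + (D - 1 - s₀) : ℕ) : ZMod (t + 1)), ?_⟩
        show exVtx C u a D K (((K + (t - D) + 2 + (D - 1 - s₀) : ℕ) : ZMod (t + 1)).val) = C.vtx w
        rw [ZMod.val_cast_of_lt (by omega : K + (t - D) + 2 + (D - 1 - s₀) < t + 1)]
        unfold exVtx
        rw [if_neg (by omega), if_neg (by omega), if_neg (by omega)]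
        have hpe : D - 1 - (K + (t - D) + 2 + (D - 1 - s₀) - (K + (t - D) + 2)) = s₀ := by omega
        rw [hpe, hw]
    · -- initial segment: p = s₀
      refine ⟨((s₀ : ℕ) : ZMod (t + 1)), ?_⟩
      show exVtx C u a D K (((s₀ : ℕ) : ZMod (t + 1)).val) = C.vtx w
      rw [ZMod.val_cast_of_lt (by omega : s₀ < t + 1)]
      unfold exVtx
      rw [if_pos (by omega)]
      rw [hw]
  · intro hsup
    refine hu (hsup ⟨((K + (t - D) + 1 : ℕ) : ZMod (t + 1)), ?_⟩)
    show exVtx C u a D K (((K + (t - D) + 1 : ℕ) : ZMod (t + 1)).val) = u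
    rw [ZMod.val_cast_of_lt (by omega : K + (t - D) + 1 < t + 1)]
    unfold exVtx
    rw [if_neg (by omega), if_neg (by omega), if_pos rfl]

lemma exists_four {α : Type*} [DecidableEq α] {F : Finset α} (h : 4 ≤ F.card) :
    ∃ a b c d, a ∈ F ∧ b ∈ F ∧ c ∈ F ∧ d ∈ F ∧
      a ≠ b ∧ a ≠ c ∧ a ≠ d ∧ b ≠ c ∧ b ≠ d ∧ c ≠ d := by
  obtain ⟨a, ha⟩ := Finset.card_pos.mp (show 0 < F.card by omega)
  have h2 : 3 ≤ (F.erase a).card := by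
    have := Finset.card_erase_of_mem ha; omega
  obtain ⟨b, hb⟩ := Finset.card_pos.mp (show 0 < (F.erase a).card by omega)
  have h3 : 2 ≤ ((F.erase a).erase b).card := by
    have := Finset.card_erase_of_mem hb; omega
  obtain ⟨c, hc⟩ := Finset.card_pos.mp (show 0 < ((F.erase a).erase b).card by omega)
  have h4 : 1 ≤ (((F.erase a).erase b).erase c).card := by
    have := Finset.card_erase_of_mem hc; omega
  obtain ⟨d, hd⟩ := Finset.card_pos.mp
    (show 0 < (((F.erase a).erase b).erase c).card by omega)
  have hbF := Finset.mem_of_mem_erase hb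
  have hcF := Finset.mem_of_mem_erase (Finset.mem_of_mem_erase hc)
  have hdF := Finset.mem_of_mem_erase (Finset.mem_of_mem_erase (Finset.mem_of_mem_erase hd))
  refine ⟨a, b, c, d, ha, hbF, hcF, hdF, ?_, ?_, ?_, ?_, ?_, ?_⟩
  · exact fun h => (Finset.ne_of_mem_erase hb) h.symm
  · exact fun h => (Finset.ne_of_mem_erase (Finset.mem_of_mem_erase hc)) h.symm
  · exact fun h =>
      (Finset.ne_of_mem_erase (Finset.mem_of_mem_erase (Finset.mem_of_mem_erase hd))) h.symm
  · exact fun h => (Finset.ne_of_mem_erase hc) h.symm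
  · exact fun h => (Finset.ne_of_mem_erase (Finset.mem_of_mem_erase hd)) h.symm
  · exact fun h => (Finset.ne_of_mem_erase hd) h.symm

section Counting

variable {V : Type*} [DecidableEq V] {H : Finset (Finset V)} {t : ℕ}

/-- cast injectivity on `[0,t)` -/
lemma cast_injt [NeZero t] {s s' : ℕ} (hs : s < t) (hs' : s' < t)
    (h : (s : ZMod t) = (s' : ZMod t)) : s = s' := by
  have h1 := ZMod.val_cast_of_lt (n := t) hs
  have h2 := ZMod.val_cast_of_lt (n := t) hs'
  rw [h] at h1; omega

open scoped Classical in
/-- cycle edges having `C.vtx a` as their "third" vertex -/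
noncomputable def TF [NeZero t] (C : BergeCycle H t) (a : ZMod t) : Finset (ZMod t) :=
  Finset.univ.filter (fun m => C.vtx a ∈ C.edge m ∧ a ≠ m ∧ a ≠ m + 1)

open scoped Classical in
/-- the arc positions strictly inside the arc from `a` to `b` -/
noncomputable def arcF (t : ℕ) [NeZero t] (a b : ZMod t) : Finset (ZMod t) :=
  (Finset.Icc 1 ((b - a).val - 3)).image (fun s : ℕ => a + (s : ZMod t))

open scoped Classical in
/-- usable positions for the pair `(a, b)` -/
noncomputable def posF [NeZero t] (C : BergeCycle H t) (a b : ZMod t) : Finset (ZMod t) :=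
  (arcF t a b).filter (fun k => HAdj H (C.vtx a) (C.vtx (k + 1)) ∧
    HAdj H (C.vtx b) (C.vtx k) ∧ C.vtx (k + 1) ∉ C.edge a ∧ C.vtx k ∉ C.edge b)

open scoped Classical in
/-- the neighbours of `C.vtx a` on the cycle -/
noncomputable def adjF [NeZero t] (C : BergeCycle H t) (a : ZMod t) : Finset (ZMod t) :=
  Finset.univ.filter (fun w => HAdj H (C.vtx a) (C.vtx w))

lemma adjF_card [NeZero t] (C : BergeCycle H t) (a : ZMod t) :
    C.dC (C.vtx a) = (adjF C a).card := by
  classical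
  unfold BergeCycle.dC
  have hset : {v | v ∈ Set.range C.vtx ∧ HAdj H (C.vtx a) v}
      = C.vtx '' {w | HAdj H (C.vtx a) (C.vtx w)} := by
    ext x
    constructor
    · rintro ⟨⟨w, rfl⟩, hadj⟩
      exact ⟨w, hadj, rfl⟩
    · rintro ⟨w, hw, rfl⟩
      exact ⟨⟨w, rfl⟩, hw⟩
  rw [hset, Set.ncard_image_of_injective _ C.vtx_inj]
  have : {w | HAdj H (C.vtx a) (C.vtx w)} = ↑(adjF C a) := by
    ext w; simp [adjF]
  rw [this, Set.ncard_coe_finset]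

lemma arc_mem_iff [NeZero t] {a b k : ZMod t} :
    k ∈ arcF t a b ↔ ∃ s : ℕ, 1 ≤ s ∧ s ≤ (b - a).val - 3 ∧ a + (s : ZMod t) = k := by
  unfold arcF
  simp only [Finset.mem_image, Finset.mem_Icc]
  constructor
  · rintro ⟨s, ⟨h1, h2⟩, h3⟩; exact ⟨s, h1, h2, h3⟩
  · rintro ⟨s, h1, h2, h3⟩; exact ⟨s, ⟨h1, h2⟩, h3⟩

lemma block [NeZero t] (C : BergeCycle H t) (h3 : IsThreeGraph H) {u : V}
    (hu : u ∉ Set.range C.vtx) (ht66 : 66 ≤ t)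
    (hmax : ¬ ∃ (t' : ℕ) (C' : BergeCycle H t'), Set.range C.vtx ⊂ Set.range C'.vtx)
    {U : Set (ZMod t)} (hU : Usable C u U) {a b : ZMod t} (haU : a ∈ U) (hbU : b ∈ U)
    (hab : a ≠ b) {k : ZMod t} (hk : k ∈ posF C a b) :
    (k + 1) ∈ TF C a ∨ (k - 1) ∈ TF C b := by
  classical
  have hkk := hk
  rw [posF, Finset.mem_filter] at hkk
  obtain ⟨hkarc, hadj1, hadj2, hx1, hx2⟩ := hkk
  obtain ⟨K, hK1, hKD, hkeq⟩ := arc_mem_iff.mp hkarc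
  set D := (b - a).val with hDdef
  have hDlt : D < t := ZMod.val_lt _
  have hbeq : a + (D : ZMod t) = b := by
    rw [hDdef, ZMod.natCast_rightInverse (b - a)]; ring
  have hD2 : 2 ≤ D := by
    rcases Nat.lt_or_ge D 2 with h | h
    · exfalso
      have h01 : D = 0 ∨ D = 1 := by omega
      rcases h01 with h0 | h1
      · have hba : a = b := by rw [← hbeq, h0]; simp
        exact hab hba
      · have hb1 : b = a + 1 := by rw [← hbeq, h1]; simp
        exact (hU.2.1 a haU b hbU hab).1 hb1
    · exact h
  have hDt : D ≤ t - 2 := by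
    rcases Nat.lt_or_ge (t - 2) D with h | h
    · exfalso
      have hDt1 : D = t - 1 := by omega
      have hb1 : b = a - 1 := by
        rw [← hbeq, hDt1]
        have : ((t - 1 : ℕ) : ZMod t) = -1 := by
          rw [Nat.cast_sub (by omega : 1 ≤ t)]; simp
        rw [this]; ring
      exact (hU.2.1 a haU b hbU hab).2 hb1
    · exact h
  obtain ⟨e, heH, e', he'H, hee', hene, heu, hea, he'ne, he'u, he'b⟩ :=
    hU.2.2 a haU b hbU hab
  -- basic cast facts
  have hkp1 : a + (K : ZMod t) + 1 = k + 1 := by rw [hkeq]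
  have hak1 : a ≠ k + 1 := by
    intro h
    have : ((0 : ℕ) : ZMod t) = ((K + 1 : ℕ) : ZMod t) := by
      push_cast
      rw [← hkp1] at h
      linear_combination h
    have := cast_injt (by omega) (by omega) this
    omega
  have hak2 : a ≠ k + 1 + 1 := by
    intro h
    have : ((0 : ℕ) : ZMod t) = ((K + 2 : ℕ) : ZMod t) := by
      push_cast
      rw [← hkp1] at h
      linear_combination h
    have := cast_injt (by omega) (by omega) this
    omega
  have hbk1 : b ≠ k - 1 := by
    intro h
    rw [← hbeq, ← hkeq] at h
    have : ((D + 1 : ℕ) : ZMod t) = ((K : ℕ) : ZMod t) := by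
      push_cast
      linear_combination h
    have := cast_injt (by omega) (by omega) this
    omega
  have hbk0 : b ≠ k - 1 + 1 := by
    intro h
    rw [← hbeq, ← hkeq] at h
    have : ((D : ℕ) : ZMod t) = ((K : ℕ) : ZMod t) := by
      push_cast
      linear_combination h
    have := cast_injt (by omega) (by omega) this
    omega
  by_contra hcon
  push_neg at hcon
  obtain ⟨hna, hnb⟩ := hcon
  -- a good chord for the pair (a, k+1)
  obtain ⟨-, f0, hf0H, hf0a, hf0k⟩ := hadj1
  have hf0ne : f0 ≠ C.edge (k + 1) := by
    intro hEq
    apply hna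
    rw [TF, Finset.mem_filter]
    exact ⟨Finset.mem_univ _, hEq ▸ hf0a, hak1, hak2⟩
  obtain ⟨-, g0, hg0H, hg0b, hg0k⟩ := hadj2
  have hg0ne : g0 ≠ C.edge (k - 1) := by
    intro hEq
    apply hnb
    rw [TF, Finset.mem_filter]
    refine ⟨Finset.mem_univ _, hEq ▸ hg0b, hbk1, hbk0⟩
  apply hmax
  refine ⟨t + 1, ?_⟩
  have hkm1 : a + (K : ZMod t) - 1 = k - 1 := by rw [hkeq]
  exact extend C h3 hu ht66 a D K hD2 hDt hK1 hKD heH he'H hf0H hg0H hee' heu hea hene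
    he'u (by rw [hbeq]; exact he'b) (by rw [hbeq]; exact he'ne)
    hf0a (by rw [hkp1]; exact hf0k) (by rw [hkp1]; exact hf0ne)
    (by rw [hbeq]; exact hg0b) (by rw [hkeq]; exact hg0k) (by rw [hkm1]; exact hg0ne)
    (by rw [hkp1]; exact hx1) (by rw [hkeq, hbeq]; exact hx2)

end Counting

section Counting2

variable {V : Type*} [DecidableEq V] {H : Finset (Finset V)} {t : ℕ}

lemma arc_card [NeZero t] {a b : ZMod t} : (arcF t a b).card = (b - a).val - 3 := by
  classical
  have hDlt : (b - a).val < t := ZMod.val_lt _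
  unfold arcF
  rw [Finset.card_image_of_injOn, Nat.card_Icc]
  · omega
  · intro s hs s' hs' h
    simp only [Finset.coe_Icc, Set.mem_Icc] at hs hs'
    exact cast_injt (by omega) (by omega) (add_left_cancel h)

lemma TF_disj [NeZero t] (C : BergeCycle H t) (h3 : IsThreeGraph H) (ht2 : 2 ≤ t)
    {a b : ZMod t} (hab : a ≠ b) : Disjoint (TF C a) (TF C b) := by
  classical
  rw [Finset.disjoint_left]
  intro m hma hmb
  rw [TF, Finset.mem_filter] at hma hmb
  obtain ⟨-, hva, ham, ham1⟩ := hma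
  obtain ⟨-, hvb, hbm, hbm1⟩ := hmb
  have hmm1 : C.vtx m ≠ C.vtx (m + 1) := by
    intro h
    have h0 := C.vtx_inj h
    have h1 : ((0 : ℕ) : ZMod t) = ((1 : ℕ) : ZMod t) := by
      push_cast; linear_combination h0
    have := cast_injt (by omega) (by omega) h1
    omega
  have hc : (C.edge m).card ≤ 3 := by
    rcases h3 _ (C.edge_mem m) with h | h <;> omega
  have h4 := four_le_card (C.mem_fst m) (C.mem_snd m) hva hvb hmm1
    (fun h => ham (C.vtx_inj h).symm) (fun h => hbm (C.vtx_inj h).symm)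
    (fun h => ham1 (C.vtx_inj h).symm) (fun h => hbm1 (C.vtx_inj h).symm)
    (fun h => hab (C.vtx_inj h))
  omega

lemma pair_bound [NeZero t] (C : BergeCycle H t) (h3 : IsThreeGraph H) {u : V}
    (hu : u ∉ Set.range C.vtx) (ht66 : 66 ≤ t)
    (hmax : ¬ ∃ (t' : ℕ) (C' : BergeCycle H t'), Set.range C.vtx ⊂ Set.range C'.vtx)
    {U : Set (ZMod t)} (hU : Usable C u U) {a b : ZMod t} (haU : a ∈ U) (hbU : b ∈ U)
    (hab : a ≠ b) :
    ((adjF C a).card : ℤ) + (adjF C b).card - t - 18 ≤ ((TF C a).card : ℤ) + (TF C b).card := by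
  classical
  set D := (b - a).val with hDdef
  set D' := (a - b).val with hD'def
  have hDlt : D < t := ZMod.val_lt _
  have hD'lt : D' < t := ZMod.val_lt _
  have hbeq : a + (D : ZMod t) = b := by
    rw [hDdef, ZMod.natCast_rightInverse (b - a)]; ring
  have haeq : b + (D' : ZMod t) = a := by
    rw [hD'def, ZMod.natCast_rightInverse (a - b)]; ring
  haveI : NeZero (b - a) := ⟨sub_ne_zero.mpr hab.symm⟩
  have hDD' : D + D' = t := by
    have h1 : a - b = -(b - a) := by ring
    have h2 : D' = t - D := by
      rw [hD'def, h1, ZMod.val_neg_of_ne_zero]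
    have hD0 : D ≠ 0 := by
      intro h
      have hba : a = b := by rw [← hbeq, h]; simp
      exact hab hba
    omega
  have hD2 : 2 ≤ D := by
    rcases Nat.lt_or_ge D 2 with h | h
    · exfalso
      have h01 : D = 0 ∨ D = 1 := by omega
      rcases h01 with h0 | h1
      · exact hab (by rw [← hbeq, h0]; simp)
      · exact (hU.2.1 a haU b hbU hab).1 (by rw [← hbeq, h1]; simp)
    · exact h
  have hDt : D ≤ t - 2 := by
    rcases Nat.lt_or_ge (t - 2) D with h | h
    · exfalso
      have hD'1 : D' = 1 := by omega
      exact (hU.2.1 b hbU a haU (Ne.symm hab)).1 (by rw [← haeq, hD'1]; simp)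
    · exact h
  -- injections
  have hinjp : Function.Injective (fun x : ZMod t => x + 1) := fun x y h => by
    have h' : x + 1 = y + 1 := h
    linear_combination h'
  have hinjm : Function.Injective (fun x : ZMod t => x - 1) := fun x y h => by
    have h' : x - 1 = y - 1 := h
    linear_combination h'
  have hinjv : Function.Injective (fun k : ZMod t => C.vtx (k + 1)) := fun x y h => by
    have h' : x + 1 = y + 1 := C.vtx_inj h
    linear_combination h'
  -- characterizations of arc membership
  have harcab : ∀ {k : ZMod t}, k ∈ arcF t a b →
      ∃ s : ℕ, 1 ≤ s ∧ s ≤ D - 3 ∧ a + (s : ZMod t) = k := fun hk => arc_mem_iff.mp hk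
  have harcba : ∀ {k : ZMod t}, k ∈ arcF t b a →
      ∃ s : ℕ, 1 ≤ s ∧ s ≤ D' - 3 ∧ a + ((D + s : ℕ) : ZMod t) = k := by
    intro k hk
    obtain ⟨s, hs1, hs2, hs3⟩ := arc_mem_iff.mp hk
    exact ⟨s, hs1, hs2, by rw [← hs3, ← hbeq]; push_cast; ring⟩
  -- upper bound : posF(a,b) + posF(b,a) ≤ TF a + TF b
  set PA := (posF C a b).filter (fun k => (k + 1) ∈ TF C a) with hPA
  set PB := (posF C a b).filter (fun k => (k - 1) ∈ TF C b) with hPB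
  set QA := (posF C b a).filter (fun k => (k + 1) ∈ TF C b) with hQA
  set QB := (posF C b a).filter (fun k => (k - 1) ∈ TF C a) with hQB
  have hcov1 : posF C a b ⊆ PA ∪ PB := by
    intro k hk
    rcases block C h3 hu ht66 hmax hU haU hbU hab hk with h | h
    · exact Finset.mem_union_left _ (Finset.mem_filter.mpr ⟨hk, h⟩)
    · exact Finset.mem_union_right _ (Finset.mem_filter.mpr ⟨hk, h⟩)
  have hcov2 : posF C b a ⊆ QA ∪ QB := by
    intro k hk
    rcases block C h3 hu ht66 hmax hU hbU haU (Ne.symm hab) hk with h | h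
    · exact Finset.mem_union_left _ (Finset.mem_filter.mpr ⟨hk, h⟩)
    · exact Finset.mem_union_right _ (Finset.mem_filter.mpr ⟨hk, h⟩)
  have hposab_arc : ∀ {k : ZMod t}, k ∈ posF C a b → k ∈ arcF t a b :=
    fun hk => (Finset.mem_filter.mp hk).1
  have hposba_arc : ∀ {k : ZMod t}, k ∈ posF C b a → k ∈ arcF t b a :=
    fun hk => (Finset.mem_filter.mp hk).1
  have hAside : PA.card + QB.card ≤ (TF C a).card := by
    have himg1 : PA.image (fun x => x + 1) ⊆ TF C a := by
      intro m hm
      obtain ⟨k, hk, rfl⟩ := Finset.mem_image.mp hm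
      exact (Finset.mem_filter.mp hk).2
    have himg2 : QB.image (fun x => x - 1) ⊆ TF C a := by
      intro m hm
      obtain ⟨k, hk, rfl⟩ := Finset.mem_image.mp hm
      exact (Finset.mem_filter.mp hk).2
    have hdisj : Disjoint (PA.image (fun x => x + 1)) (QB.image (fun x => x - 1)) := by
      rw [Finset.disjoint_left]
      intro m hm1 hm2
      obtain ⟨k, hk, rfl⟩ := Finset.mem_image.mp hm1
      obtain ⟨k', hk', hkk⟩ := Finset.mem_image.mp hm2
      obtain ⟨s, hs1, hs2, hseq⟩ := harcab (hposab_arc (Finset.mem_filter.mp hk).1)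
      obtain ⟨s', hs1', hs2', hseq'⟩ := harcba (hposba_arc (Finset.mem_filter.mp hk').1)
      have h1 : a + ((s + 1 : ℕ) : ZMod t) = k + 1 := by rw [← hseq]; push_cast; ring
      have h2 : a + ((D + s' - 1 : ℕ) : ZMod t) = k + 1 := by
        rw [← hkk, ← hseq', Nat.cast_sub (by omega : 1 ≤ D + s')]; push_cast; ring
      have h3 := cast_injt (show s + 1 < t by omega) (show D + s' - 1 < t by omega)
        (add_left_cancel (h1.trans h2.symm))
      omega
    calc PA.card + QB.card
        = (PA.image (fun x => x + 1)).card + (QB.image (fun x => x - 1)).card := by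
          rw [Finset.card_image_of_injective _ hinjp, Finset.card_image_of_injective _ hinjm]
      _ = ((PA.image (fun x => x + 1)) ∪ (QB.image (fun x => x - 1))).card :=
          (Finset.card_union_of_disjoint hdisj).symm
      _ ≤ (TF C a).card := Finset.card_le_card (Finset.union_subset himg1 himg2)
  have hBside : PB.card + QA.card ≤ (TF C b).card := by
    have himg1 : PB.image (fun x => x - 1) ⊆ TF C b := by
      intro m hm
      obtain ⟨k, hk, rfl⟩ := Finset.mem_image.mp hm
      exact (Finset.mem_filter.mp hk).2
    have himg2 : QA.image (fun x => x + 1) ⊆ TF C b := by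
      intro m hm
      obtain ⟨k, hk, rfl⟩ := Finset.mem_image.mp hm
      exact (Finset.mem_filter.mp hk).2
    have hdisj : Disjoint (PB.image (fun x => x - 1)) (QA.image (fun x => x + 1)) := by
      rw [Finset.disjoint_left]
      intro m hm1 hm2
      obtain ⟨k, hk, rfl⟩ := Finset.mem_image.mp hm1
      obtain ⟨k', hk', hkk⟩ := Finset.mem_image.mp hm2
      obtain ⟨s, hs1, hs2, hseq⟩ := harcab (hposab_arc (Finset.mem_filter.mp hk).1)
      obtain ⟨s', hs1', hs2', hseq'⟩ := harcba (hposba_arc (Finset.mem_filter.mp hk').1)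
      have h1 : a + ((s - 1 : ℕ) : ZMod t) = k - 1 := by
        rw [← hseq, Nat.cast_sub (by omega : 1 ≤ s)]; push_cast; ring
      have h2 : a + ((D + s' + 1 : ℕ) : ZMod t) = k - 1 := by
        rw [← hkk, ← hseq']; push_cast; ring
      have h3 := cast_injt (show s - 1 < t by omega) (show D + s' + 1 < t by omega)
        (add_left_cancel (h1.trans h2.symm))
      omega
    calc PB.card + QA.card
        = (PB.image (fun x => x - 1)).card + (QA.image (fun x => x + 1)).card := by
          rw [Finset.card_image_of_injective _ hinjm, Finset.card_image_of_injective _ hinjp]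
      _ = ((PB.image (fun x => x - 1)) ∪ (QA.image (fun x => x + 1))).card :=
          (Finset.card_union_of_disjoint hdisj).symm
      _ ≤ (TF C b).card := Finset.card_le_card (Finset.union_subset himg1 himg2)
  have hupper : (posF C a b).card + (posF C b a).card ≤ (TF C a).card + (TF C b).card := by
    have h1 : (posF C a b).card ≤ PA.card + PB.card :=
      le_trans (Finset.card_le_card hcov1) (Finset.card_union_le _ _)
    have h2 : (posF C b a).card ≤ QA.card + QB.card :=
      le_trans (Finset.card_le_card hcov2) (Finset.card_union_le _ _)
    omega
  -- lower bounds
  set nonadjA := Finset.univ \ adjF C a with hnadjA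
  set nonadjB := Finset.univ \ adjF C b with hnadjB
  have hNAcard : nonadjA.card = t - (adjF C a).card := by
    rw [hnadjA, Finset.card_sdiff_of_subset (Finset.subset_univ _), Finset.card_univ, ZMod.card]
  have hNBcard : nonadjB.card = t - (adjF C b).card := by
    rw [hnadjB, Finset.card_sdiff_of_subset (Finset.subset_univ _), Finset.card_univ, ZMod.card]
  have hAle : (adjF C a).card ≤ t := by
    have := Finset.card_le_univ (adjF C a)
    rwa [ZMod.card] at this
  have hBle : (adjF C b).card ≤ t := by
    have := Finset.card_le_univ (adjF C b)
    rwa [ZMod.card] at this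
  set badAab := (arcF t a b).filter (fun k => ¬ HAdj H (C.vtx a) (C.vtx (k + 1))) with hbadAab
  set badBab := (arcF t a b).filter (fun k => ¬ HAdj H (C.vtx b) (C.vtx k)) with hbadBab
  set badAba := (arcF t b a).filter (fun k => ¬ HAdj H (C.vtx b) (C.vtx (k + 1))) with hbadAba
  set badBba := (arcF t b a).filter (fun k => ¬ HAdj H (C.vtx a) (C.vtx k)) with hbadBba
  set ex1ab := (arcF t a b).filter (fun k => C.vtx (k + 1) ∈ C.edge a) with hex1ab
  set ex2ab := (arcF t a b).filter (fun k => C.vtx k ∈ C.edge b) with hex2ab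
  set ex1ba := (arcF t b a).filter (fun k => C.vtx (k + 1) ∈ C.edge b) with hex1ba
  set ex2ba := (arcF t b a).filter (fun k => C.vtx k ∈ C.edge a) with hex2ba
  have hcovab : arcF t a b ⊆ posF C a b ∪ badAab ∪ badBab ∪ ex1ab ∪ ex2ab := by
    intro k hk
    simp only [Finset.mem_union]
    by_cases c1 : HAdj H (C.vtx a) (C.vtx (k + 1))
    · by_cases c2 : HAdj H (C.vtx b) (C.vtx k)
      · by_cases c3 : C.vtx (k + 1) ∈ C.edge a
        · exact Or.inl (Or.inr (Finset.mem_filter.mpr ⟨hk, c3⟩))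
        · by_cases c4 : C.vtx k ∈ C.edge b
          · exact Or.inr (Finset.mem_filter.mpr ⟨hk, c4⟩)
          · exact Or.inl (Or.inl (Or.inl (Or.inl
              (Finset.mem_filter.mpr ⟨hk, c1, c2, c3, c4⟩))))
      · exact Or.inl (Or.inl (Or.inr (Finset.mem_filter.mpr ⟨hk, c2⟩)))
    · exact Or.inl (Or.inl (Or.inl (Or.inr (Finset.mem_filter.mpr ⟨hk, c1⟩))))
  have hcovba : arcF t b a ⊆ posF C b a ∪ badAba ∪ badBba ∪ ex1ba ∪ ex2ba := by
    intro k hk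
    simp only [Finset.mem_union]
    by_cases c1 : HAdj H (C.vtx b) (C.vtx (k + 1))
    · by_cases c2 : HAdj H (C.vtx a) (C.vtx k)
      · by_cases c3 : C.vtx (k + 1) ∈ C.edge b
        · exact Or.inl (Or.inr (Finset.mem_filter.mpr ⟨hk, c3⟩))
        · by_cases c4 : C.vtx k ∈ C.edge a
          · exact Or.inr (Finset.mem_filter.mpr ⟨hk, c4⟩)
          · exact Or.inl (Or.inl (Or.inl (Or.inl
              (Finset.mem_filter.mpr ⟨hk, c1, c2, c3, c4⟩))))
      · exact Or.inl (Or.inl (Or.inr (Finset.mem_filter.mpr ⟨hk, c2⟩)))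
    · exact Or.inl (Or.inl (Or.inl (Or.inr (Finset.mem_filter.mpr ⟨hk, c1⟩))))
  have hedgea : (C.edge a).card ≤ 3 := by rcases h3 _ (C.edge_mem a) with h | h <;> omega
  have hedgeb : (C.edge b).card ≤ 3 := by rcases h3 _ (C.edge_mem b) with h | h <;> omega
  have hex1abc : ex1ab.card ≤ 3 := by
    calc ex1ab.card = (ex1ab.image (fun k => C.vtx (k + 1))).card :=
          (Finset.card_image_of_injective _ hinjv).symm
      _ ≤ (C.edge a).card := Finset.card_le_card (by
          intro x hx
          obtain ⟨k, hk, rfl⟩ := Finset.mem_image.mp hx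
          exact (Finset.mem_filter.mp hk).2)
      _ ≤ 3 := hedgea
  have hex2abc : ex2ab.card ≤ 3 := by
    calc ex2ab.card = (ex2ab.image C.vtx).card :=
          (Finset.card_image_of_injective _ C.vtx_inj).symm
      _ ≤ (C.edge b).card := Finset.card_le_card (by
          intro x hx
          obtain ⟨k, hk, rfl⟩ := Finset.mem_image.mp hx
          exact (Finset.mem_filter.mp hk).2)
      _ ≤ 3 := hedgeb
  have hex1bac : ex1ba.card ≤ 3 := by
    calc ex1ba.card = (ex1ba.image (fun k => C.vtx (k + 1))).card :=
          (Finset.card_image_of_injective _ hinjv).symm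
      _ ≤ (C.edge b).card := Finset.card_le_card (by
          intro x hx
          obtain ⟨k, hk, rfl⟩ := Finset.mem_image.mp hx
          exact (Finset.mem_filter.mp hk).2)
      _ ≤ 3 := hedgeb
  have hex2bac : ex2ba.card ≤ 3 := by
    calc ex2ba.card = (ex2ba.image C.vtx).card :=
          (Finset.card_image_of_injective _ C.vtx_inj).symm
      _ ≤ (C.edge a).card := Finset.card_le_card (by
          intro x hx
          obtain ⟨k, hk, rfl⟩ := Finset.mem_image.mp hx
          exact (Finset.mem_filter.mp hk).2)
      _ ≤ 3 := hedgea
  have hlowab : D - 3 ≤ (posF C a b).card + badAab.card + badBab.card + 6 := by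
    have hcc := Finset.card_le_card hcovab
    rw [arc_card] at hcc
    have u1 := Finset.card_union_le (posF C a b ∪ badAab ∪ badBab ∪ ex1ab) ex2ab
    have u2 := Finset.card_union_le (posF C a b ∪ badAab ∪ badBab) ex1ab
    have u3 := Finset.card_union_le (posF C a b ∪ badAab) badBab
    have u4 := Finset.card_union_le (posF C a b) badAab
    omega
  have hlowba : D' - 3 ≤ (posF C b a).card + badAba.card + badBba.card + 6 := by
    have hcc := Finset.card_le_card hcovba
    rw [arc_card] at hcc
    have u1 := Finset.card_union_le (posF C b a ∪ badAba ∪ badBba ∪ ex1ba) ex2ba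
    have u2 := Finset.card_union_le (posF C b a ∪ badAba ∪ badBba) ex1ba
    have u3 := Finset.card_union_le (posF C b a ∪ badAba) badBba
    have u4 := Finset.card_union_le (posF C b a) badAba
    omega
  have hbadA : badAab.card + badBba.card + (adjF C a).card ≤ t := by
    have himg1 : badAab.image (fun x => x + 1) ⊆ nonadjA := by
      intro m hm
      obtain ⟨k, hk, rfl⟩ := Finset.mem_image.mp hm
      rw [hnadjA, Finset.mem_sdiff]
      refine ⟨Finset.mem_univ _, ?_⟩
      rw [adjF, Finset.mem_filter]
      push_neg
      intro _
      exact (Finset.mem_filter.mp hk).2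
    have himg2 : badBba ⊆ nonadjA := by
      intro k hk
      rw [hnadjA, Finset.mem_sdiff]
      refine ⟨Finset.mem_univ _, ?_⟩
      rw [adjF, Finset.mem_filter]
      push_neg
      intro _
      exact (Finset.mem_filter.mp hk).2
    have hdisj : Disjoint (badAab.image (fun x => x + 1)) badBba := by
      rw [Finset.disjoint_left]
      intro m hm1 hm2
      obtain ⟨k, hk, rfl⟩ := Finset.mem_image.mp hm1
      obtain ⟨s, hs1, hs2, hseq⟩ := harcab (Finset.mem_filter.mp hk).1
      obtain ⟨s', hs1', hs2', hseq'⟩ := harcba (Finset.mem_filter.mp hm2).1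
      have h1 : a + ((s + 1 : ℕ) : ZMod t) = k + 1 := by rw [← hseq]; push_cast; ring
      have h3 := cast_injt (show s + 1 < t by omega) (show D + s' < t by omega)
        (add_left_cancel (h1.trans hseq'.symm))
      omega
    have hcard : badAab.card + badBba.card ≤ nonadjA.card := by
      calc badAab.card + badBba.card
          = (badAab.image (fun x => x + 1)).card + badBba.card := by
            rw [Finset.card_image_of_injective _ hinjp]
        _ = ((badAab.image (fun x => x + 1)) ∪ badBba).card :=
            (Finset.card_union_of_disjoint hdisj).symm
        _ ≤ nonadjA.card := Finset.card_le_card (Finset.union_subset himg1 himg2)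
    omega
  have hbadB : badBab.card + badAba.card + (adjF C b).card ≤ t := by
    have himg1 : badBab ⊆ nonadjB := by
      intro k hk
      rw [hnadjB, Finset.mem_sdiff]
      refine ⟨Finset.mem_univ _, ?_⟩
      rw [adjF, Finset.mem_filter]
      push_neg
      intro _
      exact (Finset.mem_filter.mp hk).2
    have himg2 : badAba.image (fun x => x + 1) ⊆ nonadjB := by
      intro m hm
      obtain ⟨k, hk, rfl⟩ := Finset.mem_image.mp hm
      rw [hnadjB, Finset.mem_sdiff]
      refine ⟨Finset.mem_univ _, ?_⟩
      rw [adjF, Finset.mem_filter]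
      push_neg
      intro _
      exact (Finset.mem_filter.mp hk).2
    have hdisj : Disjoint badBab (badAba.image (fun x => x + 1)) := by
      rw [Finset.disjoint_left]
      intro m hm1 hm2
      obtain ⟨k, hk, hkk⟩ := Finset.mem_image.mp hm2
      obtain ⟨s, hs1, hs2, hseq⟩ := harcab (Finset.mem_filter.mp hm1).1
      obtain ⟨s', hs1', hs2', hseq'⟩ := harcba (Finset.mem_filter.mp hk).1
      have h1 : a + ((D + s' + 1 : ℕ) : ZMod t) = m := by
        rw [← hkk, ← hseq']; push_cast; ring
      have h3 := cast_injt (show s < t by omega) (show D + s' + 1 < t by omega)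
        (add_left_cancel (hseq.trans h1.symm))
      omega
    have hcard : badBab.card + badAba.card ≤ nonadjB.card := by
      calc badBab.card + badAba.card
          = badBab.card + (badAba.image (fun x => x + 1)).card := by
            rw [Finset.card_image_of_injective _ hinjp]
        _ = (badBab ∪ (badAba.image (fun x => x + 1))).card :=
            (Finset.card_union_of_disjoint hdisj).symm
        _ ≤ nonadjB.card := Finset.card_le_card (Finset.union_subset himg1 himg2)
    omega
  omega

end Counting2

end Stmt12

/-- Lemma 5(e): at most `3` vertices of the usable set `U` lie
in `B'(C) = {v : d_C(v) ≥ 3n/4 + 13}`. -/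
theorem stmt12 {V : Type*} [Fintype V] [DecidableEq V] (n : ℕ) (hn : 69 ≤ n)
    (hcard : Fintype.card V = n) (H : Finset (Finset V)) (h3 : IsThreeGraph H)
    (hOre : ∀ u v : V, u ≠ v → ¬ HAdj H u v →
      n + 65 ≤ shadowDeg H u + shadowDeg H v)
    (hnoham : ¬ HamiltonianBergeCycle H)
    {t : ℕ} (C : BergeCycle H t)
    (hmax : ¬ ∃ (t' : ℕ) (C' : BergeCycle H t'),
      Set.range C.vtx ⊂ Set.range C'.vtx)
    (ht : t = n - 1 ∨ t = n - 2 ∨ t = n - 3)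
    (u : V) (hu : u ∉ Set.range C.vtx)
    (U : Set (ZMod t)) (hU : Usable C u U) (hUcard : (C.dC u : ℚ) / 6 ≤ U.ncard) :
    {i ∈ U | 3 * (n : ℚ) / 4 + 13 ≤ (C.dC (C.vtx i) : ℚ)}.ncard ≤ 3 := by
    classical
  obtain ⟨ht66, htn⟩ : 66 ≤ t ∧ t ≤ n - 1 := by
    rcases ht with h | h | h <;> exact ⟨by omega, by omega⟩
  haveI : NeZero t := ⟨by omega⟩
  by_contra hgoal
  push_neg at hgoal
  set S := {i ∈ U | 3 * (n : ℚ) / 4 + 13 ≤ (C.dC (C.vtx i) : ℚ)} with hS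
  have hfin : S.Finite := Set.toFinite _
  have h4 : 4 ≤ hfin.toFinset.card := by
    rw [← Set.ncard_eq_toFinset_card S hfin]
    omega
  obtain ⟨a1, a2, a3, a4, m1, m2, m3, m4, n12, n13, n14, n23, n24, n34⟩ :=
    Stmt12.exists_four h4
  rw [Set.Finite.mem_toFinset, hS, Set.mem_setOf_eq] at m1 m2 m3 m4
  obtain ⟨hU1, hd1⟩ := m1
  obtain ⟨hU2, hd2⟩ := m2
  obtain ⟨hU3, hd3⟩ := m3
  obtain ⟨hU4, hd4⟩ := m4
  rw [Stmt12.adjF_card] at hd1 hd2 hd3 hd4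
  have p12 := Stmt12.pair_bound C h3 hu ht66 hmax hU hU1 hU2 n12
  have p13 := Stmt12.pair_bound C h3 hu ht66 hmax hU hU1 hU3 n13
  have p14 := Stmt12.pair_bound C h3 hu ht66 hmax hU hU1 hU4 n14
  have p23 := Stmt12.pair_bound C h3 hu ht66 hmax hU hU2 hU3 n23
  have p24 := Stmt12.pair_bound C h3 hu ht66 hmax hU hU2 hU4 n24
  have p34 := Stmt12.pair_bound C h3 hu ht66 hmax hU hU3 hU4 n34
  have d12 := Stmt12.TF_disj C h3 (by omega) n12
  have d13 := Stmt12.TF_disj C h3 (by omega) n13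
  have d14 := Stmt12.TF_disj C h3 (by omega) n14
  have d23 := Stmt12.TF_disj C h3 (by omega) n23
  have d24 := Stmt12.TF_disj C h3 (by omega) n24
  have d34 := Stmt12.TF_disj C h3 (by omega) n34
  have D3 : Disjoint (Stmt12.TF C a1 ∪ Stmt12.TF C a2) (Stmt12.TF C a3) :=
    Finset.disjoint_union_left.mpr ⟨d13, d23⟩
  have D4 : Disjoint ((Stmt12.TF C a1 ∪ Stmt12.TF C a2) ∪ Stmt12.TF C a3)
      (Stmt12.TF C a4) :=
    Finset.disjoint_union_left.mpr ⟨Finset.disjoint_union_left.mpr ⟨d14, d24⟩, d34⟩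
  have hTsum : (Stmt12.TF C a1).card + (Stmt12.TF C a2).card + (Stmt12.TF C a3).card
      + (Stmt12.TF C a4).card ≤ t := by
    have hle := Finset.card_le_univ
      (((Stmt12.TF C a1 ∪ Stmt12.TF C a2) ∪ Stmt12.TF C a3) ∪ Stmt12.TF C a4)
    rw [Finset.card_union_of_disjoint D4, Finset.card_union_of_disjoint D3,
      Finset.card_union_of_disjoint d12, ZMod.card] at hle
    omega
  have q12 : ((Stmt12.adjF C a1).card : ℚ) + ((Stmt12.adjF C a2).card : ℚ) - t - 18
      ≤ ((Stmt12.TF C a1).card : ℚ) + ((Stmt12.TF C a2).card : ℚ) := by exact_mod_cast p12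
  have q13 : ((Stmt12.adjF C a1).card : ℚ) + ((Stmt12.adjF C a3).card : ℚ) - t - 18
      ≤ ((Stmt12.TF C a1).card : ℚ) + ((Stmt12.TF C a3).card : ℚ) := by exact_mod_cast p13
  have q14 : ((Stmt12.adjF C a1).card : ℚ) + ((Stmt12.adjF C a4).card : ℚ) - t - 18
      ≤ ((Stmt12.TF C a1).card : ℚ) + ((Stmt12.TF C a4).card : ℚ) := by exact_mod_cast p14
  have q23 : ((Stmt12.adjF C a2).card : ℚ) + ((Stmt12.adjF C a3).card : ℚ) - t - 18
      ≤ ((Stmt12.TF C a2).card : ℚ) + ((Stmt12.TF C a3).card : ℚ) := by exact_mod_cast p23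
  have q24 : ((Stmt12.adjF C a2).card : ℚ) + ((Stmt12.adjF C a4).card : ℚ) - t - 18
      ≤ ((Stmt12.TF C a2).card : ℚ) + ((Stmt12.TF C a4).card : ℚ) := by exact_mod_cast p24
  have q34 : ((Stmt12.adjF C a3).card : ℚ) + ((Stmt12.adjF C a4).card : ℚ) - t - 18
      ≤ ((Stmt12.TF C a3).card : ℚ) + ((Stmt12.TF C a4).card : ℚ) := by exact_mod_cast p34
  have hTq : ((Stmt12.TF C a1).card : ℚ) + ((Stmt12.TF C a2).card : ℚ)
      + ((Stmt12.TF C a3).card : ℚ) + ((Stmt12.TF C a4).card : ℚ) ≤ t := by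
    exact_mod_cast hTsum
  have htq : (t : ℚ) ≤ (n : ℚ) - 1 := by
    have h1 : (t : ℚ) ≤ ((n - 1 : ℕ) : ℚ) := by exact_mod_cast htn
    have h2 : ((n - 1 : ℕ) : ℚ) = (n : ℚ) - 1 := by
      rw [Nat.cast_sub (by omega : 1 ≤ n)]
      norm_num
    rw [h2] at h1
    exact h1
  linarith
end
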